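/- arXiv:1602.00811 — 10 statements merged into one kernel-verified Lean document; each statement's English description precedes it below -/
import Mathlib

section
/- Let 𝒮 be a sharp fs monoid and r ∈ R(𝒮). For f, g ∈ 𝒮 \ {1}, one has 𝒮(r,f) ⊆ 𝒮(r,g) if and only if r(f,g) ≠ ∞, and 𝒮(r,f) ⊇ 𝒮(r,g) if and only if r(f,g) ≠ 0. Consequently the collection of faces {𝒮(r,f) : f ∈ 𝒮 \ {1}} ∪ {{1}} is totally ordered by inclusion. -/
open scoped ENNReal

/-- The axioms for an element of the space of ratios `R(𝒮)` of a monoid `𝒮`. -/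
def IsRatioMap {M : Type*} [CommMonoid M] (r : M → M → ℝ≥0∞) : Prop :=
  (∀ f g : M, (f, g) ≠ (1, 1) → r g f = (r f g)⁻¹) ∧
  (∀ f g h : M, (f, g) ≠ (1, 1) → (g, h) ≠ (1, 1) → (f, h) ≠ (1, 1) →
    ¬((r f g = 0 ∧ r g h = ⊤) ∨ (r f g = ⊤ ∧ r g h = 0)) →
    r f g * r g h = r f h) ∧
  (∀ f g h : M, (f, h) ≠ (1, 1) → (g, h) ≠ (1, 1) → (f * g, h) ≠ (1, 1) →
    r (f * g) h = r f h + r g h)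

lemma ratio_self_ne_top {M : Type*} [CommMonoid M] {r : M → M → ℝ≥0∞}
    (hr : IsRatioMap r) {f : M} (hf : f ≠ 1) : r f f ≠ ⊤ ∧ r f f ≠ 0 := by
  have h := hr.1 f f (by simp [hf])
  constructor
  · intro h0
    rw [h0] at h
    simp at h
  · intro h0
    rw [h0] at h
    simp at h

lemma ratio_one {M : Type*} [CommMonoid M] {r : M → M → ℝ≥0∞}
    (hr : IsRatioMap r) {g : M} (hg : g ≠ 1) : r 1 g = 0 := by
  have h := hr.2.2 g 1 g (by simp [hg]) (by simp [hg]) (by simp [hg])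
  rw [mul_one] at h
  have hne := (ratio_self_ne_top hr hg).1
  have : r g g + 0 = r g g + r 1 g := by rw [add_zero]; exact h
  exact ((ENNReal.add_right_inj hne).mp this).symm

lemma ratio_subset {M : Type*} [CommMonoid M] {r : M → M → ℝ≥0∞}
    (hr : IsRatioMap r) {f g : M} (hf : f ≠ 1) (hg : g ≠ 1) :
    ({x : M | r x f ≠ ⊤} ⊆ {x : M | r x g ≠ ⊤}) ↔ r f g ≠ ⊤ := by
  constructor
  · intro hsub
    exact hsub (ratio_self_ne_top hr hf).1
  · intro h x hx
    simp only [Set.mem_setOf_eq] at hx ⊢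
    by_cases hx1 : x = 1
    · simp [hx1, ratio_one hr hg]
    · have ht := hr.2.1 x f g (by simp [hf]) (by simp [hg]) (by simp [hg])
        (by rintro (⟨_, h2⟩ | ⟨h1, _⟩); exacts [h h2, hx h1])
      rw [← ht]
      exact ENNReal.mul_ne_top hx h

/-- Let `𝒮` be a sharp fs monoid and `r ∈ R(𝒮)`. For `f, g ≠ 1`,
`𝒮(r,f) ⊆ 𝒮(r,g)` iff `r(f,g) ≠ ∞`, and `𝒮(r,f) ⊇ 𝒮(r,g)` iff `r(f,g) ≠ 0`.
Consequently the collection `{𝒮(r,f) : f ≠ 1} ∪ {{1}}` is totally ordered by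
inclusion. -/
theorem statement2 {M : Type*} [CancelCommMonoid M]
    (hfg : Monoid.FG M)
    (hsat : ∀ x y : M, (∃ n : ℕ, 1 ≤ n ∧ x ^ n ∣ y ^ n) → x ∣ y)
    (hsharp : ∀ x y : M, x * y = 1 → x = 1)
    (r : M → M → ℝ≥0∞) (hr : IsRatioMap r) :
    (∀ f g : M, f ≠ 1 → g ≠ 1 →
      (({x : M | r x f ≠ ⊤} ⊆ {x : M | r x g ≠ ⊤}) ↔ r f g ≠ ⊤) ∧
      (({x : M | r x g ≠ ⊤} ⊆ {x : M | r x f ≠ ⊤}) ↔ r f g ≠ 0)) ∧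
    (∀ F₁ F₂ : Set M,
      F₁ ∈ {F : Set M | (∃ f : M, f ≠ 1 ∧ F = {x : M | r x f ≠ ⊤}) ∨ F = {1}} →
      F₂ ∈ {F : Set M | (∃ f : M, f ≠ 1 ∧ F = {x : M | r x f ≠ ⊤}) ∨ F = {1}} →
      F₁ ⊆ F₂ ∨ F₂ ⊆ F₁) := by
  have key : ∀ f g : M, f ≠ 1 → g ≠ 1 →
      (({x : M | r x f ≠ ⊤} ⊆ {x : M | r x g ≠ ⊤}) ↔ r f g ≠ ⊤) ∧
      (({x : M | r x g ≠ ⊤} ⊆ {x : M | r x f ≠ ⊤}) ↔ r f g ≠ 0) := by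
    intro f g hf hg
    refine ⟨ratio_subset hr hf hg, ?_⟩
    rw [ratio_subset hr hg hf, hr.1 f g (by simp [hf])]
    simp [ENNReal.inv_ne_top]
  refine ⟨key, ?_⟩
  rintro F₁ F₂ (⟨f, hf, rfl⟩ | rfl) (⟨g, hg, rfl⟩ | rfl)
  · by_cases ht : r f g = ⊤
    · right
      rw [(key f g hf hg).2]
      intro h0
      have := hr.1 f g (by simp [hf])
      rw [h0] at ht
      simp at ht
    · left; exact ((key f g hf hg).1).mpr ht
  · right
    intro x hx
    rw [Set.mem_singleton_iff] at hx
    subst hx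
    simp [Set.mem_setOf_eq, ratio_one hr hf]
  · left
    intro x hx
    rw [Set.mem_singleton_iff] at hx
    subst hx
    simp [Set.mem_setOf_eq, ratio_one hr hg]
  · left; rfl
end

section
/- The map R(ℕ²) → [0,∞] sending r to r(q₁, q₂), where q₁ = (1,0) and q₂ = (0,1) are the standard generators of ℕ², is a bijection. -/
open scoped ENNReal

/-- The ratio axioms for a map `r : (ℕ² × ℕ²) \ {(0,0)} → [0,∞]` (additive
notation, with neutral element `0` playing the role of `1`):
(i) `r(g,f) = r(f,g)⁻¹`; (ii) `r(f,g)·r(g,h) = r(f,h)` whenever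
`{r(f,g), r(g,h)} ≠ {0,∞}`; (iii) `r(f+g,h) = r(f,h) + r(g,h)`. -/
def IsRatioMapN2
    (r : {p : (ℕ × ℕ) × (ℕ × ℕ) // p ≠ 0} → ℝ≥0∞) : Prop :=
  (∀ (f g : ℕ × ℕ) (h1 : ((f, g) : (ℕ × ℕ) × (ℕ × ℕ)) ≠ 0)
      (h2 : ((g, f) : (ℕ × ℕ) × (ℕ × ℕ)) ≠ 0),
      r ⟨(g, f), h2⟩ = (r ⟨(f, g), h1⟩)⁻¹) ∧
  (∀ (f g h : ℕ × ℕ) (h1 : ((f, g) : (ℕ × ℕ) × (ℕ × ℕ)) ≠ 0)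
      (h2 : ((g, h) : (ℕ × ℕ) × (ℕ × ℕ)) ≠ 0)
      (h3 : ((f, h) : (ℕ × ℕ) × (ℕ × ℕ)) ≠ 0),
      ¬((r ⟨(f, g), h1⟩ = 0 ∧ r ⟨(g, h), h2⟩ = ⊤) ∨
        (r ⟨(f, g), h1⟩ = ⊤ ∧ r ⟨(g, h), h2⟩ = 0)) →
      r ⟨(f, g), h1⟩ * r ⟨(g, h), h2⟩ = r ⟨(f, h), h3⟩) ∧
  (∀ (f g h : ℕ × ℕ) (h1 : ((f, h) : (ℕ × ℕ) × (ℕ × ℕ)) ≠ 0)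
      (h2 : ((g, h) : (ℕ × ℕ) × (ℕ × ℕ)) ≠ 0)
      (h3 : ((f + g, h) : (ℕ × ℕ) × (ℕ × ℕ)) ≠ 0),
      r ⟨(f + g, h), h3⟩ = r ⟨(f, h), h1⟩ + r ⟨(g, h), h2⟩)

section Aux

open scoped NNReal


/-- explicit candidate ratio map with parameter `t` -/
noncomputable def rmapFun (t : ℝ≥0∞) (f g : ℕ × ℕ) : ℝ≥0∞ :=
  if g = 0 then ⊤
  else (f.1 : ℝ≥0∞) * ((g.1 : ℝ≥0∞) + (g.2 : ℝ≥0∞) * t⁻¹)⁻¹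
     + (f.2 : ℝ≥0∞) * ((g.1 : ℝ≥0∞) * t + (g.2 : ℝ≥0∞))⁻¹

lemma prodNe {f : ℕ × ℕ} : f ≠ 0 ↔ f.1 ≠ 0 ∨ f.2 ≠ 0 :=
  by
  constructor
  · intro h
    by_contra hc
    push_neg at hc
    exact h (Prod.ext_iff.mpr (by simp [hc.1, hc.2]))
  · intro h he
    rcases h with h | h <;> simp [he] at h

lemma rmapFun_zero' (t : ℝ≥0∞) (f : ℕ × ℕ) : rmapFun t f 0 = ⊤ := if_pos rfl

lemma rmapFun_zero (f g : ℕ × ℕ) (hg : g ≠ 0) :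
    rmapFun 0 f g =
      if g.2 = 0 ∧ f.2 = 0 then (f.1 : ℝ≥0∞) / g.1 else (f.2 : ℝ≥0∞) / g.2 := by
  rw [rmapFun, if_neg hg]
  rcases eq_or_ne g.2 0 with hd | hd
  · rcases eq_or_ne f.2 0 with hb | hb
    · simp [hd, hb, div_eq_mul_inv]
    · rw [if_neg (by tauto), hd]
      simp [ENNReal.mul_top (by exact_mod_cast hb : (f.2 : ℝ≥0∞) ≠ 0), ENNReal.div_zero
        (by exact_mod_cast hb : (f.2 : ℝ≥0∞) ≠ 0)]
  · rw [if_neg (by tauto)]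
    have : (g.2 : ℝ≥0∞) * (0 : ℝ≥0∞)⁻¹ = ⊤ := by
      simp [ENNReal.mul_top (by exact_mod_cast hd : (g.2 : ℝ≥0∞) ≠ 0)]
    rw [this]
    simp [div_eq_mul_inv]


lemma rmapFun_top (f g : ℕ × ℕ) :
    rmapFun ⊤ f g = rmapFun 0 (f.2, f.1) (g.2, g.1) := by
  have hz : ((g.2, g.1) : ℕ × ℕ) = 0 ↔ g = 0 := by
    constructor <;> intro h <;>
      [exact Prod.ext_iff.mpr ⟨by simpa using (Prod.ext_iff.mp h).2,
        by simpa using (Prod.ext_iff.mp h).1⟩ ;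
       exact Prod.ext_iff.mpr ⟨by simpa using (Prod.ext_iff.mp h).2,
        by simpa using (Prod.ext_iff.mp h).1⟩]
  rcases eq_or_ne g 0 with hg | hg
  · rw [rmapFun, if_pos hg, rmapFun, if_pos (hz.mpr hg)]
  · rw [rmapFun, if_neg hg, rmapFun, if_neg (fun h => hg (hz.mp h))]
    simp only [ENNReal.inv_top, ENNReal.inv_zero, mul_zero, add_zero, zero_add]
    rw [add_comm ((g.2 : ℝ≥0∞)) ((g.1 : ℝ≥0∞) * ⊤)]
    ring

/-- the finite positive "value" -/
noncomputable def W (s : ℝ≥0) (f : ℕ × ℕ) : ℝ≥0∞ := ((f.1 * s + f.2 : ℝ≥0) : ℝ≥0∞)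

lemma W_ne_top (s : ℝ≥0) (f : ℕ × ℕ) : W s f ≠ ⊤ := ENNReal.coe_ne_top

lemma W_eq_zero {s : ℝ≥0} (hs : s ≠ 0) (f : ℕ × ℕ) : W s f = 0 ↔ f = 0 := by
  rw [W, ENNReal.coe_eq_zero, add_eq_zero, mul_eq_zero]
  simp [hs, prodNe, not_or, Prod.ext_iff]

lemma W_add (s : ℝ≥0) (f g : ℕ × ℕ) : W s (f + g) = W s f + W s g := by
  rw [W, W, W, ← ENNReal.coe_add]
  congr 1
  simp only [Prod.fst_add, Prod.snd_add]
  push_cast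
  ring

lemma rmapFun_coe {s : ℝ≥0} (hs : s ≠ 0) (f g : ℕ × ℕ) (hfg : f ≠ 0 ∨ g ≠ 0) :
    rmapFun (s : ℝ≥0∞) f g = W s f / W s g := by
  rcases eq_or_ne g 0 with hg | hg
  · have hf : f ≠ 0 := hfg.resolve_right (not_not_intro hg)
    have hW0 : W s 0 = 0 := by simp [W]
    rw [hg, rmapFun_zero', hW0, ENNReal.div_zero (fun h => hf ((W_eq_zero hs f).mp h))]
  · rw [rmapFun, if_neg hg]
    have hD : ((g.1 : ℝ≥0) * s + g.2) ≠ 0 := by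
      intro h
      rcases add_eq_zero.mp h with ⟨h1, h2⟩
      rcases mul_eq_zero.mp h1 with h1 | h1
      · exact hg (Prod.ext_iff.mpr ⟨by exact_mod_cast h1, by exact_mod_cast h2⟩)
      · exact hs h1
    have e1 : ((g.1 : ℝ≥0∞) + (g.2 : ℝ≥0∞) * ((s : ℝ≥0∞))⁻¹)
        = (((g.1 : ℝ≥0) + g.2 * s⁻¹ : ℝ≥0) : ℝ≥0∞) := by
      rw [ENNReal.coe_add, ENNReal.coe_mul, ENNReal.coe_inv hs]
      norm_cast
    have e2 : ((g.1 : ℝ≥0∞) * (s : ℝ≥0∞) + (g.2 : ℝ≥0∞))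
        = (((g.1 : ℝ≥0) * s + g.2 : ℝ≥0) : ℝ≥0∞) := by
      rw [ENNReal.coe_add, ENNReal.coe_mul]
      norm_cast
    have hE : ((g.1 : ℝ≥0) + g.2 * s⁻¹) ≠ 0 := by
      intro h
      rcases add_eq_zero.mp h with ⟨h1, h2⟩
      rcases mul_eq_zero.mp h2 with h2 | h2
      · exact hg (Prod.ext_iff.mpr ⟨by exact_mod_cast h1, by exact_mod_cast h2⟩)
      · exact (inv_ne_zero hs) h2
    rw [e1, e2, ← ENNReal.coe_inv hE, ← ENNReal.coe_inv hD, W, W,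
      ← ENNReal.coe_div hD]
    norm_cast
    -- now an identity in ℝ≥0
    have key : ((g.1 : ℝ≥0) + g.2 * s⁻¹) = ((g.1 : ℝ≥0) * s + g.2) * s⁻¹ := by
      rw [add_mul, mul_assoc, mul_inv_cancel₀ hs, mul_one]
    rw [key, mul_inv, inv_inv, div_eq_mul_inv]
    ring


def P1 (R : (ℕ × ℕ) → (ℕ × ℕ) → ℝ≥0∞) : Prop :=
  ∀ f g : ℕ × ℕ, f ≠ 0 ∨ g ≠ 0 → R g f = (R f g)⁻¹

def P2 (R : (ℕ × ℕ) → (ℕ × ℕ) → ℝ≥0∞) : Prop :=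
  ∀ f g h : ℕ × ℕ, f ≠ 0 ∨ g ≠ 0 → g ≠ 0 ∨ h ≠ 0 → f ≠ 0 ∨ h ≠ 0 →
    ¬((R f g = 0 ∧ R g h = ⊤) ∨ (R f g = ⊤ ∧ R g h = 0)) →
    R f g * R g h = R f h

def P3 (R : (ℕ × ℕ) → (ℕ × ℕ) → ℝ≥0∞) : Prop :=
  ∀ f g h : ℕ × ℕ, f ≠ 0 ∨ h ≠ 0 → g ≠ 0 ∨ h ≠ 0 → f + g ≠ 0 ∨ h ≠ 0 →
    R (f + g) h = R f h + R g h

lemma P1_coe {s : ℝ≥0} (hs : s ≠ 0) : P1 (rmapFun (s : ℝ≥0∞)) := by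
  intro f g hfg
  rw [rmapFun_coe hs f g hfg, rmapFun_coe hs g f hfg.symm]
  rw [ENNReal.inv_div (Or.inl (W_ne_top s g))
    (by rcases hfg with h | h
        · exact Or.inr (fun hh => h ((W_eq_zero hs f).mp hh))
        · exact Or.inl (fun hh => h ((W_eq_zero hs g).mp hh)))]

lemma P2_coe {s : ℝ≥0} (hs : s ≠ 0) : P2 (rmapFun (s : ℝ≥0∞)) := by
  intro f g h hfg hgh hfh hdeg
  rw [rmapFun_coe hs f g hfg, rmapFun_coe hs g h hgh, rmapFun_coe hs f h hfh] at *
  rcases eq_or_ne g 0 with hg | hg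
  · have hWg : W s g = 0 := (W_eq_zero hs g).mpr hg
    have hgh0 : W s g / W s h = 0 := by rw [hWg, ENNReal.zero_div]
    have hWf : W s f = 0 := by
      by_contra hWf
      exact hdeg (Or.inr ⟨by rw [hWg, ENNReal.div_zero hWf], hgh0⟩)
    simp [hWf, hWg, ENNReal.zero_div]
  · have h0 : W s g ≠ 0 := fun hh => hg ((W_eq_zero hs g).mp hh)
    rw [div_eq_mul_inv, div_eq_mul_inv, div_eq_mul_inv]
    calc W s f * (W s g)⁻¹ * (W s g * (W s h)⁻¹)
        = W s f * (((W s g)⁻¹ * W s g) * (W s h)⁻¹) := by ring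
      _ = W s f * (W s h)⁻¹ := by
          rw [ENNReal.inv_mul_cancel h0 (W_ne_top s g), one_mul]

lemma P3_coe {s : ℝ≥0} (hs : s ≠ 0) : P3 (rmapFun (s : ℝ≥0∞)) := by
  intro f g h hfh hgh hfgh
  rw [rmapFun_coe hs f h hfh, rmapFun_coe hs g h hgh, rmapFun_coe hs _ h hfgh,
    W_add, ENNReal.add_div]


lemma rmapFun_left_zero (t : ℝ≥0∞) {g : ℕ × ℕ} (hg : g ≠ 0) : rmapFun t 0 g = 0 := by
  rw [rmapFun, if_neg hg]
  simp

lemma P1_zero : P1 (rmapFun 0) := by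
  intro f g hfg
  rcases eq_or_ne g 0 with hg | hg
  · have hf : f ≠ 0 := hfg.resolve_right (not_not_intro hg)
    rw [hg, rmapFun_zero', rmapFun_left_zero 0 hf]
    simp
  · rcases eq_or_ne f 0 with hf | hf
    · rw [hf, rmapFun_zero', rmapFun_left_zero 0 hg]
      simp
    · rw [rmapFun_zero f g hg, rmapFun_zero g f hf]
      by_cases hb : f.2 = 0 <;> by_cases hd : g.2 = 0
      · rw [if_pos (show f.2 = 0 ∧ g.2 = 0 from ⟨hb, hd⟩),
          if_pos (show g.2 = 0 ∧ f.2 = 0 from ⟨hd, hb⟩)]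
        exact (ENNReal.inv_div (Or.inl (ENNReal.natCast_ne_top _))
          (Or.inr (by exact_mod_cast (prodNe.mp hf).resolve_right (not_not_intro hb)))).symm
      all_goals
        rw [if_neg (by tauto), if_neg (by tauto)]
        exact (ENNReal.inv_div (Or.inl (ENNReal.natCast_ne_top _))
          (by simp only [ne_eq, Nat.cast_eq_zero]; tauto)).symm

lemma P2_zero : P2 (rmapFun 0) := by
  intro f g h hfg hgh hfh hdeg
  rcases eq_or_ne g 0 with hg | hg
  · exact absurd (Or.inr ⟨by rw [hg]; exact rmapFun_zero' 0 f,
      by rw [hg]; exact rmapFun_left_zero 0 (hgh.resolve_left (not_not_intro hg))⟩) hdeg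
  rcases eq_or_ne h 0 with hh | hh
  · have hne : rmapFun 0 f g ≠ 0 := fun h0 =>
      hdeg (Or.inl ⟨h0, by rw [hh]; exact rmapFun_zero' 0 g⟩)
    rw [hh, rmapFun_zero' 0 g, rmapFun_zero' 0 f, ENNReal.mul_top hne]
  rw [rmapFun_zero f g hg, rmapFun_zero g h hh] at hdeg ⊢
  rw [rmapFun_zero f h hh]
  by_cases hk : h.2 = 0
  · by_cases hd : g.2 = 0
    · by_cases hb : f.2 = 0
      · rw [if_pos (show g.2 = 0 ∧ f.2 = 0 from ⟨hd, hb⟩),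
          if_pos (show h.2 = 0 ∧ g.2 = 0 from ⟨hk, hd⟩),
          if_pos (show h.2 = 0 ∧ f.2 = 0 from ⟨hk, hb⟩)]
        have hc : (g.1 : ℝ≥0∞) ≠ 0 := by
          exact_mod_cast (prodNe.mp hg).resolve_right (not_not_intro hd)
        rw [div_eq_mul_inv, div_eq_mul_inv, div_eq_mul_inv]
        calc (f.1 : ℝ≥0∞) * (↑g.1)⁻¹ * (↑g.1 * (↑h.1)⁻¹)
            = ↑f.1 * (((↑g.1)⁻¹ * ↑g.1) * (↑h.1)⁻¹) := by ring
          _ = ↑f.1 * (↑h.1)⁻¹ := by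
              rw [ENNReal.inv_mul_cancel hc (ENNReal.natCast_ne_top _), one_mul]
      · rw [if_neg (show ¬(g.2 = 0 ∧ f.2 = 0) by tauto),
          if_pos (show h.2 = 0 ∧ g.2 = 0 from ⟨hk, hd⟩)] at hdeg ⊢
        rw [if_neg (show ¬(h.2 = 0 ∧ f.2 = 0) by tauto)]
        have hT : (f.2 : ℝ≥0∞) / ↑g.2 = ⊤ := by
          rw [hd, Nat.cast_zero]; exact ENNReal.div_zero (by exact_mod_cast hb)
        have hTk : (f.2 : ℝ≥0∞) / ↑h.2 = ⊤ := by
          rw [hk, Nat.cast_zero]; exact ENNReal.div_zero (by exact_mod_cast hb)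
        have hne : (g.1 : ℝ≥0∞) / ↑h.1 ≠ 0 := fun h0 => hdeg (Or.inr ⟨hT, h0⟩)
        rw [hT, hTk, ENNReal.top_mul hne]
    · rw [if_neg (show ¬(h.2 = 0 ∧ g.2 = 0) from fun hc => hd hc.2),
        if_neg (show ¬(g.2 = 0 ∧ f.2 = 0) from fun hc => hd hc.1)] at hdeg ⊢
      have hgh_top : (g.2 : ℝ≥0∞) / ↑h.2 = ⊤ := by
        rw [hk, Nat.cast_zero]; exact ENNReal.div_zero (by exact_mod_cast hd)
      have hb : f.2 ≠ 0 := by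
        intro hb0
        exact hdeg (Or.inl ⟨by rw [hb0, Nat.cast_zero, ENNReal.zero_div], hgh_top⟩)
      rw [if_neg (fun hc : h.2 = 0 ∧ f.2 = 0 => hb hc.2)]
      have hne : (f.2 : ℝ≥0∞) / ↑g.2 ≠ 0 := by
        intro h0
        rcases ENNReal.div_eq_zero_iff.mp h0 with h0 | h0
        · exact hb (by exact_mod_cast h0)
        · exact (ENNReal.natCast_ne_top _) h0
      rw [hgh_top, ENNReal.mul_top hne, hk, Nat.cast_zero,
        ENNReal.div_zero (by exact_mod_cast hb)]
  · rw [if_neg (show ¬(h.2 = 0 ∧ g.2 = 0) from fun hc => hk hc.1)] at hdeg ⊢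
    rw [if_neg (show ¬(h.2 = 0 ∧ f.2 = 0) from fun hc => hk hc.1)]
    by_cases hd : g.2 = 0
    · have hgh0 : (g.2 : ℝ≥0∞) / ↑h.2 = 0 := by
        rw [hd, Nat.cast_zero, ENNReal.zero_div]
      have hb : f.2 = 0 := by
        by_contra hb
        refine hdeg (Or.inr ⟨?_, hgh0⟩)
        rw [if_neg (fun hc : g.2 = 0 ∧ f.2 = 0 => hb hc.2), hd, Nat.cast_zero]
        exact ENNReal.div_zero (by exact_mod_cast hb)
      rw [if_pos (show g.2 = 0 ∧ f.2 = 0 from ⟨hd, hb⟩), hgh0, mul_zero, hb, Nat.cast_zero, ENNReal.zero_div]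
    · rw [if_neg (fun hc : g.2 = 0 ∧ f.2 = 0 => hd hc.1)]
      have hdne : (g.2 : ℝ≥0∞) ≠ 0 := by exact_mod_cast hd
      rw [div_eq_mul_inv, div_eq_mul_inv, div_eq_mul_inv]
      calc (f.2 : ℝ≥0∞) * (↑g.2)⁻¹ * (↑g.2 * (↑h.2)⁻¹)
          = ↑f.2 * (((↑g.2)⁻¹ * ↑g.2) * (↑h.2)⁻¹) := by ring
        _ = ↑f.2 * (↑h.2)⁻¹ := by
            rw [ENNReal.inv_mul_cancel hdne (ENNReal.natCast_ne_top _), one_mul]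

lemma P3_zero : P3 (rmapFun 0) := by
  intro f g h hfh hgh hfgh
  rcases eq_or_ne h 0 with hh | hh
  · rw [hh, rmapFun_zero', rmapFun_zero', rmapFun_zero']
    simp
  rw [rmapFun_zero _ _ hh, rmapFun_zero _ _ hh, rmapFun_zero _ _ hh]
  have hsum2 : (f + g).2 = f.2 + g.2 := rfl
  have hsum1 : (f + g).1 = f.1 + g.1 := rfl
  by_cases hk : h.2 = 0
  · by_cases hb : f.2 = 0 <;> by_cases hb' : g.2 = 0
    · rw [if_pos (show h.2 = 0 ∧ (f + g).2 = 0 from ⟨hk, by rw [hsum2, hb, hb']⟩),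
        if_pos (show h.2 = 0 ∧ f.2 = 0 from ⟨hk, hb⟩),
        if_pos (show h.2 = 0 ∧ g.2 = 0 from ⟨hk, hb'⟩), hsum1]
      push_cast
      exact ENNReal.add_div
    · have : (f + g).2 ≠ 0 := by rw [hsum2, hb]; simpa using hb'
      rw [if_neg (show ¬(h.2 = 0 ∧ (f + g).2 = 0) from fun hc => this hc.2),
        if_pos (show h.2 = 0 ∧ f.2 = 0 from ⟨hk, hb⟩),
        if_neg (show ¬(h.2 = 0 ∧ g.2 = 0) from fun hc => hb' hc.2), hk, Nat.cast_zero,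
        ENNReal.div_zero (by exact_mod_cast this), ENNReal.div_zero (by exact_mod_cast hb'),
        add_top]
    · have : (f + g).2 ≠ 0 := by rw [hsum2, hb']; simpa using hb
      rw [if_neg (show ¬(h.2 = 0 ∧ (f + g).2 = 0) from fun hc => this hc.2),
        if_pos (show h.2 = 0 ∧ g.2 = 0 from ⟨hk, hb'⟩),
        if_neg (show ¬(h.2 = 0 ∧ f.2 = 0) from fun hc => hb hc.2), hk, Nat.cast_zero,
        ENNReal.div_zero (by exact_mod_cast this), ENNReal.div_zero (by exact_mod_cast hb),
        top_add]
    · have : (f + g).2 ≠ 0 := by rw [hsum2]; simp [hb]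
      rw [if_neg (show ¬(h.2 = 0 ∧ (f + g).2 = 0) from fun hc => this hc.2),
        if_neg (show ¬(h.2 = 0 ∧ f.2 = 0) from fun hc => hb hc.2),
        if_neg (show ¬(h.2 = 0 ∧ g.2 = 0) from fun hc => hb' hc.2), hk, Nat.cast_zero,
        ENNReal.div_zero (by exact_mod_cast this), ENNReal.div_zero (by exact_mod_cast hb),
        ENNReal.div_zero (by exact_mod_cast hb'), top_add]
  · rw [if_neg (fun hc : h.2 = 0 ∧ (f + g).2 = 0 => hk hc.1),
      if_neg (fun hc : h.2 = 0 ∧ f.2 = 0 => hk hc.1),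
      if_neg (fun hc : h.2 = 0 ∧ g.2 = 0 => hk hc.1), hsum2]
    push_cast
    exact ENNReal.add_div


lemma swap_ne_zero {f : ℕ × ℕ} (hf : f ≠ 0) : ((f.2, f.1) : ℕ × ℕ) ≠ 0 :=
  prodNe.mpr ((prodNe.mp hf).symm)

lemma P1_top : P1 (rmapFun ⊤) := by
  intro f g hfg
  rw [rmapFun_top, rmapFun_top]
  exact P1_zero _ _ (hfg.imp swap_ne_zero swap_ne_zero)

lemma P2_top : P2 (rmapFun ⊤) := by
  intro f g h hfg hgh hfh hdeg
  rw [rmapFun_top f g, rmapFun_top g h] at hdeg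
  rw [rmapFun_top f g, rmapFun_top g h, rmapFun_top f h]
  exact P2_zero _ _ _ (hfg.imp swap_ne_zero swap_ne_zero)
    (hgh.imp swap_ne_zero swap_ne_zero) (hfh.imp swap_ne_zero swap_ne_zero) hdeg

lemma P3_top : P3 (rmapFun ⊤) := by
  intro f g h hfh hgh hfgh
  rw [rmapFun_top (f + g) h, rmapFun_top f h, rmapFun_top g h]
  exact P3_zero (f.2, f.1) (g.2, g.1) (h.2, h.1)
    (hfh.imp swap_ne_zero swap_ne_zero) (hgh.imp swap_ne_zero swap_ne_zero)
    (hfgh.imp swap_ne_zero swap_ne_zero)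

lemma pairNe {f g : ℕ × ℕ} : ((f, g) : (ℕ × ℕ) × (ℕ × ℕ)) ≠ 0 ↔ f ≠ 0 ∨ g ≠ 0 := by
  constructor
  · intro h
    by_contra hc
    push_neg at hc
    exact h (Prod.ext_iff.mpr (by simp [hc.1, hc.2]))
  · intro h he
    have h1 := (Prod.ext_iff.mp he).1
    have h2 := (Prod.ext_iff.mp he).2
    simp only [Prod.fst_zero, Prod.snd_zero] at h1 h2
    rcases h with h | h
    · exact h h1
    · exact h h2


lemma isRatio_rmap (t : ℝ≥0∞) : IsRatioMapN2 (fun p => rmapFun t p.1.1 p.1.2) := by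
  have hP : P1 (rmapFun t) ∧ P2 (rmapFun t) ∧ P3 (rmapFun t) := by
    rcases eq_or_ne t 0 with rfl | h0
    · exact ⟨P1_zero, P2_zero, P3_zero⟩
    rcases eq_or_ne t ⊤ with rfl | hT
    · exact ⟨P1_top, P2_top, P3_top⟩
    · lift t to ℝ≥0 using hT with s
      have hs : s ≠ 0 := by exact_mod_cast h0
      exact ⟨P1_coe hs, P2_coe hs, P3_coe hs⟩
  obtain ⟨p1, p2, p3⟩ := hP
  refine ⟨?_, ?_, ?_⟩
  · intro f g h1 h2
    exact p1 f g (pairNe.mp h1)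
  · intro f g h h1 h2 h3 hdeg
    exact p2 f g h (pairNe.mp h1) (pairNe.mp h2) (pairNe.mp h3) hdeg
  · intro f g h h1 h2 h3
    exact p3 f g h (pairNe.mp h1) (pairNe.mp h2) (pairNe.mp h3)

lemma rmap_val (t : ℝ≥0∞) :
    rmapFun t (1, 0) (0, 1) = t := by
  rw [rmapFun, if_neg (by decide)]
  simp

lemma ratio_unique (r : {p : (ℕ × ℕ) × (ℕ × ℕ) // p ≠ 0} → ℝ≥0∞) (hr : IsRatioMapN2 r) :
    r = fun p => rmapFun (r ⟨((1, 0), (0, 1)), by decide⟩) p.1.1 p.1.2 := by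
  obtain ⟨A1, A2, A3⟩ := hr
  have key : ∀ {p q : (ℕ × ℕ) × (ℕ × ℕ)} (hp : p ≠ 0) (hq : q ≠ 0), p = q →
      r ⟨p, hp⟩ = r ⟨q, hq⟩ := by
    rintro p q hp hq rfl
    rfl
  set t : ℝ≥0∞ := r ⟨((1, 0), (0, 1)), by decide⟩ with ht
  have hself : ∀ (f : ℕ × ℕ) (hf : f ≠ 0), r ⟨(f, f), pairNe.mpr (Or.inl hf)⟩ = 1 := by
    intro f hf
    have h1 := A1 f f (pairNe.mpr (Or.inl hf)) (pairNe.mpr (Or.inl hf))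
    have h2 := A2 f f f (pairNe.mpr (Or.inl hf)) (pairNe.mpr (Or.inl hf))
      (pairNe.mpr (Or.inl hf))
      (by rintro (⟨e0, eT⟩ | ⟨eT, e0⟩) <;> rw [e0] at eT <;> simp at eT)
    set x := r ⟨(f, f), pairNe.mpr (Or.inl hf)⟩ with hx
    have hx0 : x ≠ 0 := by
      intro h
      rw [h] at h1
      simp at h1
    have hxT : x ≠ ⊤ := by
      intro h
      rw [h] at h1
      simp at h1
    have hc : x * x⁻¹ = 1 := ENNReal.mul_inv_cancel hx0 hxT
    rw [← h1] at hc
    exact h2.symm.trans hc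
  have hzero : ∀ (g : ℕ × ℕ) (hg : g ≠ 0), r ⟨(0, g), pairNe.mpr (Or.inr hg)⟩ = 0 := by
    intro g hg
    have e3 := A3 g 0 g (pairNe.mpr (Or.inl hg)) (pairNe.mpr (Or.inr hg))
      (pairNe.mpr (Or.inr hg))
    rw [key (pairNe.mpr (Or.inr hg)) (pairNe.mpr (Or.inl hg))
      (by rw [add_zero])] at e3
    rw [hself g hg] at e3
    have : (1 : ℝ≥0∞) + r ⟨(0, g), pairNe.mpr (Or.inr hg)⟩ = 1 + 0 := by
      rw [add_zero]; exact e3.symm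
    exact (ENNReal.add_right_inj (by simp)).mp this
  have htop : ∀ (f : ℕ × ℕ) (hf : f ≠ 0), r ⟨(f, 0), pairNe.mpr (Or.inl hf)⟩ = ⊤ := by
    intro f hf
    have := A1 0 f (pairNe.mpr (Or.inr hf)) (pairNe.mpr (Or.inl hf))
    rw [this, hzero f hf]
    simp
  have hsmul1 : ∀ (g : ℕ × ℕ) (hg : g ≠ 0) (n : ℕ),
      r ⟨((n, 0), g), pairNe.mpr (Or.inr hg)⟩
        = n * r ⟨(((1 : ℕ), (0 : ℕ)), g), pairNe.mpr (Or.inr hg)⟩ := by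
    intro g hg n
    induction n with
    | zero =>
      rw [key (pairNe.mpr (Or.inr hg)) (pairNe.mpr (Or.inr hg))
        (by rw [Prod.mk_zero_zero]), hzero g hg]
      simp
    | succ n ih =>
      have e3 := A3 (n, 0) (1, 0) g (pairNe.mpr (Or.inr hg)) (pairNe.mpr (Or.inr hg))
        (pairNe.mpr (Or.inr hg))
      rw [key (pairNe.mpr (Or.inr hg)) (pairNe.mpr (Or.inr hg))
        (by rw [Prod.mk_add_mk])] at e3
      rw [e3, ih]
      push_cast
      ring
  have hsmul2 : ∀ (g : ℕ × ℕ) (hg : g ≠ 0) (n : ℕ),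
      r ⟨((0, n), g), pairNe.mpr (Or.inr hg)⟩
        = n * r ⟨(((0 : ℕ), (1 : ℕ)), g), pairNe.mpr (Or.inr hg)⟩ := by
    intro g hg n
    induction n with
    | zero =>
      rw [key (pairNe.mpr (Or.inr hg)) (pairNe.mpr (Or.inr hg))
        (by rw [Prod.mk_zero_zero]), hzero g hg]
      simp
    | succ n ih =>
      have e3 := A3 (0, n) (0, 1) g (pairNe.mpr (Or.inr hg)) (pairNe.mpr (Or.inr hg))
        (pairNe.mpr (Or.inr hg))
      rw [key (pairNe.mpr (Or.inr hg)) (pairNe.mpr (Or.inr hg))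
        (by rw [Prod.mk_add_mk])] at e3
      rw [e3, ih]
      push_cast
      ring
  have hadd : ∀ (g : ℕ × ℕ) (hg : g ≠ 0) (a b : ℕ),
      r ⟨((a, b), g), pairNe.mpr (Or.inr hg)⟩
        = a * r ⟨(((1 : ℕ), (0 : ℕ)), g), pairNe.mpr (Or.inr hg)⟩
          + b * r ⟨(((0 : ℕ), (1 : ℕ)), g), pairNe.mpr (Or.inr hg)⟩ := by
    intro g hg a b
    have e3 := A3 (a, 0) (0, b) g (pairNe.mpr (Or.inr hg)) (pairNe.mpr (Or.inr hg))
      (pairNe.mpr (Or.inr hg))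
    rw [key (pairNe.mpr (Or.inr hg)) (pairNe.mpr (Or.inr hg))
      (by rw [Prod.mk_add_mk, add_zero, zero_add])] at e3
    rw [e3, hsmul1 g hg a, hsmul2 g hg b]
  have hq1ne : ((1 : ℕ), (0 : ℕ)) ≠ (0 : ℕ × ℕ) := by decide
  have hq2ne : ((0 : ℕ), (1 : ℕ)) ≠ (0 : ℕ × ℕ) := by decide
  have hq21 : r ⟨(((0 : ℕ), (1 : ℕ)), ((1 : ℕ), (0 : ℕ))), pairNe.mpr (Or.inr hq1ne)⟩
      = t⁻¹ := by
    have := A1 (1, 0) (0, 1) (pairNe.mpr (Or.inl hq1ne)) (pairNe.mpr (Or.inr hq1ne))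
    rw [this]
  have hq12 : r ⟨(((1 : ℕ), (0 : ℕ)), ((0 : ℕ), (1 : ℕ))), pairNe.mpr (Or.inr hq2ne)⟩
      = t := by
    rw [ht]
  have hq1 : ∀ (c d : ℕ) (hg : ((c, d) : ℕ × ℕ) ≠ 0),
      r ⟨(((1 : ℕ), (0 : ℕ)), (c, d)), pairNe.mpr (Or.inr hg)⟩
        = ((c : ℝ≥0∞) + (d : ℝ≥0∞) * t⁻¹)⁻¹ := by
    intro c d hg
    have e1 := A1 (c, d) (1, 0) (pairNe.mpr (Or.inr hq1ne)) (pairNe.mpr (Or.inr hg))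
    rw [e1, hadd (1, 0) hq1ne c d, hself (1, 0) hq1ne, hq21, mul_one]
  have hq2 : ∀ (c d : ℕ) (hg : ((c, d) : ℕ × ℕ) ≠ 0),
      r ⟨(((0 : ℕ), (1 : ℕ)), (c, d)), pairNe.mpr (Or.inr hg)⟩
        = ((c : ℝ≥0∞) * t + (d : ℝ≥0∞))⁻¹ := by
    intro c d hg
    have e1 := A1 (c, d) (0, 1) (pairNe.mpr (Or.inr hq2ne)) (pairNe.mpr (Or.inr hg))
    rw [e1, hadd (0, 1) hq2ne c d, hself (0, 1) hq2ne, hq12, mul_one]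
  funext p
  obtain ⟨⟨⟨a, b⟩, ⟨c, d⟩⟩, hp⟩ := p
  show r ⟨((a, b), (c, d)), hp⟩ = rmapFun t (a, b) (c, d)
  rcases eq_or_ne ((c, d) : ℕ × ℕ) 0 with hg | hg
  · have hf : ((a, b) : ℕ × ℕ) ≠ 0 := (pairNe.mp hp).resolve_right (not_not_intro hg)
    rw [key hp (pairNe.mpr (Or.inl hf)) (by rw [hg]), htop (a, b) hf, hg, rmapFun_zero']
  · rw [key hp (pairNe.mpr (Or.inr hg)) rfl, hadd (c, d) hg a b, hq1 c d hg, hq2 c d hg,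
      rmapFun, if_neg hg]


end Aux


/-- The map `R(ℕ²) → [0,∞]` sending `r` to `r(q₁, q₂)`, where
`q₁ = (1,0)` and `q₂ = (0,1)` are the standard generators of `ℕ²`, is a
bijection. -/
theorem statement3 :
    Function.Bijective
      (fun r : {r : {p : (ℕ × ℕ) × (ℕ × ℕ) // p ≠ 0} → ℝ≥0∞ // IsRatioMapN2 r} =>
        r.1 ⟨((1, 0), (0, 1)), by decide⟩) := by
  constructor
  · intro r₁ r₂ hEq
    apply Subtype.ext
    rw [ratio_unique r₁.1 r₁.2, ratio_unique r₂.1 r₂.2]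
    simp only at hEq
    rw [hEq]
  · intro t
    refine ⟨⟨fun p => rmapFun t p.1.1 p.1.2, isRatio_rmap t⟩, ?_⟩
    show rmapFun t (1, 0) (0, 1) = t
    exact rmap_val t
end

section
/- Let 𝒮 be a sharp fs monoid and let V be a valuative submonoid of the group 𝒮^gp such that V ⊇ 𝒮 and V^× ∩ 𝒮 = {1}. Then for all f, g ∈ 𝒮 \ {1}, one has sup{a/b : (a,b) ∈ ℕ² \ {(0,0)}, f^b g^{-a} ∈ V} = inf{a/b : (a,b) ∈ ℕ² \ {(0,0)}, g^a f^{-b} ∈ V} in [0,∞] (with the conventions a/0 = ∞ for a > 0). -/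
open scoped ENNReal

open scoped NNReal in
private lemma statement5_rat_eq (q : ℚ) (hq : 0 ≤ q) :
    ((Real.toNNReal q : ℝ≥0) : ℝ≥0∞) = (q.num.toNat : ℝ≥0∞) / (q.den : ℝ≥0∞) := by
  rw [show (q.num.toNat : ℝ≥0∞)/(q.den : ℝ≥0∞)
      = ENNReal.ofNNReal ((q.num.toNat:ℝ≥0)/(q.den:ℝ≥0)) by
    rw [ENNReal.coe_div (by exact_mod_cast q.den_nz)]; norm_cast]
  rw [ENNReal.coe_inj]
  apply NNReal.coe_injective
  push_cast
  rw [Real.coe_toNNReal _ (by exact_mod_cast hq), Rat.cast_def]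
  have h : ((q.num.toNat : ℕ) : ℝ) = ((q.num : ℤ) : ℝ) := by
    exact_mod_cast congrArg (fun n : ℤ => (n : ℝ)) (Int.toNat_of_nonneg (Rat.num_nonneg.2 hq))
  rw [h]

open scoped NNReal in
private lemma statement5_div_le (a b c d : ℕ) (hb : b ≠ 0) (hd : d ≠ 0) (h : a*d ≤ c*b) :
    (a:ℝ≥0∞)/b ≤ (c:ℝ≥0∞)/d := by
  rw [show (a:ℝ≥0∞)/(b:ℝ≥0∞) = ENNReal.ofNNReal ((a:ℝ≥0)/(b:ℝ≥0)) by
      rw [ENNReal.coe_div (by exact_mod_cast hb)]; norm_cast,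
    show (c:ℝ≥0∞)/(d:ℝ≥0∞) = ENNReal.ofNNReal ((c:ℝ≥0)/(d:ℝ≥0)) by
      rw [ENNReal.coe_div (by exact_mod_cast hd)]; norm_cast,
    ENNReal.coe_le_coe, div_le_div_iff₀ (by positivity) (by positivity)]
  exact_mod_cast h

private lemma statement5_grp_id {L : Type*} [CommGroup L] (f g : L) (a b c d k : ℕ)
    (hk : a * d = c * b + k) :
    (f ^ b * (g ^ a)⁻¹) ^ d * (g ^ c * (f ^ d)⁻¹) ^ b = (g ^ k)⁻¹ := by
  simp only [mul_pow, inv_pow, ← pow_mul]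
  rw [hk, pow_add, mul_comm b d]
  rw [mul_inv_rev, mul_assoc, mul_assoc ((g ^ k)⁻¹), inv_mul_cancel_left,
    mul_comm ((g ^ k)⁻¹), mul_inv_cancel_left]

/-- Let `𝒮` be a sharp fs monoid, realized as a submonoid `S` of an abelian
group `L = 𝒮^gp` (so `L` is generated by `S` as a group), and let `V` be a
valuative submonoid of `L` with `V ⊇ S` and `V^× ∩ S = {1}`. Then for all
`f, g ∈ S \ {1}`,
`sup{a/b : (a,b) ≠ (0,0), f^b g^{-a} ∈ V} = inf{a/b : (a,b) ≠ (0,0), g^a f^{-b} ∈ V}`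
in `[0,∞]`. -/
theorem statement5 {L : Type*} [CommGroup L] (S : Submonoid L)
    (hgen : ∀ x : L, ∃ p ∈ S, ∃ q ∈ S, x = p * q⁻¹)
    (hfg : S.FG)
    (hsat : ∀ x : L, (∃ n : ℕ, 1 ≤ n ∧ x ^ n ∈ S) → x ∈ S)
    (hsharp : ∀ x : L, x ∈ S → x⁻¹ ∈ S → x = 1)
    (V : Submonoid L)
    (hval : ∀ x : L, x ∈ V ∨ x⁻¹ ∈ V)
    (hSV : S ≤ V)
    (hunit : ∀ x : L, x ∈ S → x ∈ V → x⁻¹ ∈ V → x = 1)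
    (f g : L) (hf : f ∈ S) (hg : g ∈ S) (hf1 : f ≠ 1) (hg1 : g ≠ 1) :
    sSup {x : ℝ≥0∞ | ∃ a b : ℕ, (a, b) ≠ (0, 0) ∧ f ^ b * (g ^ a)⁻¹ ∈ V ∧
        x = (a : ℝ≥0∞) / (b : ℝ≥0∞)}
      = sInf {x : ℝ≥0∞ | ∃ a b : ℕ, (a, b) ≠ (0, 0) ∧ g ^ a * (f ^ b)⁻¹ ∈ V ∧
        x = (a : ℝ≥0∞) / (b : ℝ≥0∞)} := by
  have hkey : ∀ a b c d : ℕ, (a, b) ≠ (0, 0) → (c, d) ≠ (0, 0) →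
      f ^ b * (g ^ a)⁻¹ ∈ V → g ^ c * (f ^ d)⁻¹ ∈ V →
      (a:ℝ≥0∞)/b ≤ (c:ℝ≥0∞)/d := by
    intro a b c d hab hcd hA hB
    simp only [ne_eq, Prod.mk.injEq, not_and] at hab hcd
    have hnat : a * d ≤ c * b := by
      by_contra hlt
      push_neg at hlt
      set k := a * d - c * b with hkdef
      have hk : a * d = c * b + k := by omega
      have hk1 : 1 ≤ k := by omega
      have hmem : (g ^ k)⁻¹ ∈ V := by
        rw [← statement5_grp_id f g a b c d k hk]
        exact mul_mem (pow_mem hA d) (pow_mem hB b)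
      have hgk : g ^ k = 1 := hunit _ (pow_mem hg k) (hSV (pow_mem hg k)) hmem
      have hpow : g * g ^ (k - 1) = g ^ k := by
        conv_rhs => rw [show k = 1 + (k - 1) from by omega]
        rw [pow_add, pow_one]
      have hginv : g⁻¹ = g ^ (k - 1) := inv_eq_of_mul_eq_one_right (hpow.trans hgk)
      exact hg1 (hsharp g hg (hginv ▸ pow_mem hg (k - 1)))
    rcases Nat.eq_zero_or_pos d with hd | hd
    · subst hd
      have hc : (c : ℝ≥0∞) ≠ 0 := by
        simpa using Nat.cast_ne_zero (R := ℝ≥0∞) |>.2 (fun h => (hcd h) rfl)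
      rw [Nat.cast_zero, ENNReal.div_zero hc]
      exact le_top
    · rcases Nat.eq_zero_or_pos b with hb | hb
      · exfalso
        have ha : a ≠ 0 := fun h => (hab h) hb
        subst hb
        rw [Nat.mul_zero] at hnat
        rcases Nat.mul_eq_zero.1 (Nat.le_zero.1 hnat) with h' | h' <;> omega
      · exact statement5_div_le a b c d (by omega) (by omega) hnat
  apply le_antisymm
  · apply sSup_le
    rintro x ⟨a, b, hab, hA, rfl⟩
    apply le_sInf
    rintro y ⟨c, d, hcd, hB, rfl⟩
    exact hkey a b c d hab hcd hA hB
  · by_contra h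
    push_neg at h
    rcases ENNReal.lt_iff_exists_rat_btwn.1 h with ⟨q, hq0, h1, h2⟩
    rw [statement5_rat_eq q hq0] at h1 h2
    set a := q.num.toNat with ha
    set b := q.den with hb
    have hbne : b ≠ 0 := q.den_nz
    have habne : (a, b) ≠ (0, 0) := by
      simp only [ne_eq, Prod.mk.injEq, not_and]
      exact fun _ => hbne
    rcases hval (g ^ a * (f ^ b)⁻¹) with hv | hv
    · have hmem : ((a:ℝ≥0∞)/b) ∈ {x : ℝ≥0∞ | ∃ a b : ℕ, (a, b) ≠ (0, 0) ∧
          g ^ a * (f ^ b)⁻¹ ∈ V ∧ x = (a : ℝ≥0∞) / (b : ℝ≥0∞)} := ⟨a, b, habne, hv, rfl⟩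
      exact absurd (sInf_le hmem) (not_le.2 h2)
    · have hv' : f ^ b * (g ^ a)⁻¹ ∈ V := by
        rwa [mul_inv_rev, inv_inv] at hv
      have hmem : ((a:ℝ≥0∞)/b) ∈ {x : ℝ≥0∞ | ∃ a b : ℕ, (a, b) ≠ (0, 0) ∧
          f ^ b * (g ^ a)⁻¹ ∈ V ∧ x = (a : ℝ≥0∞) / (b : ℝ≥0∞)} := ⟨a, b, habne, hv', rfl⟩
      exact absurd (le_sSup hmem) (not_le.2 h1)
end

section
/- Let 𝒮 be a sharp fs monoid and V ∈ V(𝒮), i.e. a valuative submonoid of 𝒮^gp containing 𝒮 with V^× ∩ 𝒮 = {1}. Define r_V(f,g) = sup{a/b : (a,b) ∈ ℕ² \ {(0,0)}, f^b g^{-a} ∈ V} for (f,g) ∈ (𝒮 × 𝒮) \ {(1,1)}. Then r_V ∈ R(𝒮), i.e. r_V satisfies: r_V(g,f) = r_V(f,g)⁻¹; r_V(f,g)r_V(g,h) = r_V(f,h) whenever {r_V(f,g), r_V(g,h)} ≠ {0,∞}; and r_V(fg,h) = r_V(f,h) + r_V(g,h). -/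
/-!
A valuative submonoid `V` induces a total preorder `x ⪯[V] y :↔ y * x⁻¹ ∈ V` compatible with
multiplication, and `rV V f g` is the supremum of the `a / b` with `g ^ a ⪯[V] f ^ b`. Every
`h ∈ S` other than `1` is strictly positive (`h⁻¹ ∉ V`), so `h ^ A ⪯[V] h ^ B` forces `A ≤ B`.
Chaining comparisons of powers gives `rV f g * rV g h ≤ rV f h`, `rV f h + rV g h ≤ rV (f * g) h`
and `rV g g = 1`, while totality of `⪯[V]` gives `(rV f g)⁻¹ ≤ rV g f`. Together with
`rV g f * rV f g ≤ rV g g = 1` this is the inversion law, and the inversion law turns the two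
inequalities into the product and sum rules.
-/

open scoped ENNReal

/-- For a valuative submonoid `V` of an abelian group `L`, the ratio
`r_V(f,g) = sup{a/b : (a,b) ≠ (0,0), f^b g^{-a} ∈ V} ∈ [0,∞]`. -/
noncomputable def rV {L : Type*} [CommGroup L] (V : Submonoid L) (f g : L) : ℝ≥0∞ :=
  sSup {x : ℝ≥0∞ | ∃ a b : ℕ, (a, b) ≠ (0, 0) ∧ f ^ b * (g ^ a)⁻¹ ∈ V ∧
    x = (a : ℝ≥0∞) / (b : ℝ≥0∞)}

open scoped NNReal

namespace ENNReal

lemma natCast_div_eq_coe (a : ℕ) {b : ℕ} (hb : b ≠ 0) :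
    (a : ℝ≥0∞) / b = ((a / b : ℝ≥0) : ℝ≥0∞) := by
  rw [coe_div (by exact_mod_cast hb)]
  norm_cast

lemma natCast_div_le_natCast_div_iff {a b c d : ℕ} (hb : b ≠ 0) (hd : d ≠ 0) :
    (a : ℝ≥0∞) / b ≤ c / d ↔ a * d ≤ c * b := by
  rw [natCast_div_eq_coe a hb, natCast_div_eq_coe c hd, coe_le_coe,
    div_le_div_iff₀ (by positivity) (by positivity)]
  norm_cast

lemma natCast_div_mul_natCast_div (a c : ℕ) {b d : ℕ} (hb : b ≠ 0) (hd : d ≠ 0) :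
    (a : ℝ≥0∞) / b * (c / d) = ((a * c : ℕ) : ℝ≥0∞) / (b * d : ℕ) := by
  rw [natCast_div_eq_coe a hb, natCast_div_eq_coe c hd,
    natCast_div_eq_coe _ (mul_ne_zero hb hd), ← coe_mul, div_mul_div_comm]
  push_cast
  rfl

lemma natCast_div_add_natCast_div (a c : ℕ) {b d : ℕ} (hb : b ≠ 0) (hd : d ≠ 0) :
    (a : ℝ≥0∞) / b + c / d = ((a * d + b * c : ℕ) : ℝ≥0∞) / (b * d : ℕ) := by
  rw [natCast_div_eq_coe a hb, natCast_div_eq_coe c hd,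
    natCast_div_eq_coe _ (mul_ne_zero hb hd), ← coe_add,
    div_add_div _ _ (by exact_mod_cast hb) (by exact_mod_cast hd)]
  push_cast
  rfl

lemma exists_natCast_div_btwn {x y : ℝ≥0∞} (h : x < y) :
    ∃ p q : ℕ, q ≠ 0 ∧ x < p / q ∧ (p : ℝ≥0∞) / q < y := by
  obtain ⟨r, hr, hxr, hry⟩ := lt_iff_exists_rat_btwn.1 h
  have hnum : ((r.num.toNat : ℕ) : ℝ) = r.num := by
    exact_mod_cast Int.toNat_of_nonneg (Rat.num_nonneg.2 hr)
  have hr : (r.num.toNat : ℝ≥0∞) / r.den = ENNReal.ofReal r := by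
    rw [Rat.cast_def, ← hnum, ofReal_div_of_pos (by positivity), ofReal_natCast, ofReal_natCast]
  exact ⟨r.num.toNat, r.den, r.den_nz, hr ▸ hxr, hr ▸ hry⟩

lemma sSup_mul_sSup_le {A B : Set ℝ≥0∞} {c : ℝ≥0∞} (h : ∀ x ∈ A, ∀ y ∈ B, x * y ≤ c) :
    sSup A * sSup B ≤ c := by
  rw [sSup_eq_iSup', sSup_eq_iSup', iSup_mul]
  refine iSup_le fun x => ?_
  rw [mul_iSup]
  exact iSup_le fun y => h x x.2 y y.2

lemma sSup_add_sSup_le {A B : Set ℝ≥0∞} (hA : A.Nonempty) (hB : B.Nonempty) {c : ℝ≥0∞}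
    (h : ∀ x ∈ A, ∀ y ∈ B, x + y ≤ c) : sSup A + sSup B ≤ c := by
  rw [sSup_eq_iSup, sSup_eq_iSup]
  exact biSup_add_biSup_le hA hB h

lemma le_inv_sSup_add_inv_sSup {A B : Set ℝ≥0∞} {c : ℝ≥0∞}
    (h : ∀ x ∈ A, ∀ y ∈ B, c ≤ x⁻¹ + y⁻¹) : c ≤ (sSup A)⁻¹ + (sSup B)⁻¹ := by
  rw [inv_sSup, inv_sSup]
  exact le_iInf₂_add_iInf₂ h

end ENNReal

section ValuativeRatio

open ENNReal

variable {L : Type*} [CommGroup L]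

/-- The condition `f ^ b * (g ^ a)⁻¹ ∈ V` in `rV` is `g ^ a ⪯[V] f ^ b` by definition. -/
def Submonoid.ValLE (V : Submonoid L) (x y : L) : Prop := y * x⁻¹ ∈ V

notation:50 x " ⪯[" V "] " y:50 => Submonoid.ValLE V x y

namespace Submonoid.ValLE

variable {V : Submonoid L} {x y z x' y' : L}

lemma refl (x : L) : x ⪯[V] x := by simp [ValLE, one_mem]

lemma trans (h₁ : x ⪯[V] y) (h₂ : y ⪯[V] z) : x ⪯[V] z := by
  rw [ValLE, show z * x⁻¹ = z * y⁻¹ * (y * x⁻¹) by group]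
  exact mul_mem h₂ h₁

instance : IsTrans L (ValLE V) := ⟨fun _ _ _ => trans⟩

lemma mul (h₁ : x ⪯[V] y) (h₂ : x' ⪯[V] y') : x * x' ⪯[V] y * y' := by
  rw [ValLE, mul_inv, mul_mul_mul_comm]
  exact mul_mem h₁ h₂

lemma pow (h : x ⪯[V] y) (n : ℕ) : x ^ n ⪯[V] y ^ n := by
  rw [ValLE, ← inv_pow, ← mul_pow]
  exact pow_mem h n

lemma pow_trans {a b c d : ℕ} (h₁ : y ^ a ⪯[V] z ^ b) (h₂ : x ^ c ⪯[V] y ^ d) :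
    x ^ (a * c) ⪯[V] z ^ (b * d) :=
  calc x ^ (a * c) = (x ^ c) ^ a := pow_mul' x a c
    _ ⪯[V] (y ^ d) ^ a := h₂.pow a
    _ = (y ^ a) ^ d := pow_right_comm y d a
    _ ⪯[V] (z ^ b) ^ d := h₁.pow d
    _ = z ^ (b * d) := (pow_mul z b d).symm

end Submonoid.ValLE

open Submonoid

lemma valLE_total {V : Submonoid L} (hval : ∀ x : L, x ∈ V ∨ x⁻¹ ∈ V) (x y : L) :
    x ⪯[V] y ∨ y ⪯[V] x := by
  refine (hval (y * x⁻¹)).imp id fun h => ?_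
  simpa [ValLE, mul_comm] using h

lemma le_of_pow_valLE_pow {V : Submonoid L} {h : L} (hh : h ∈ V) (hh' : h⁻¹ ∉ V) {A B : ℕ}
    (H : h ^ A ⪯[V] h ^ B) : A ≤ B := by
  by_contra! hlt
  obtain ⟨n, rfl⟩ := Nat.exists_eq_add_of_lt hlt
  have : h⁻¹ = h ^ B * (h ^ (B + n + 1))⁻¹ * h ^ n := by group
  exact hh' (this ▸ mul_mem H (pow_mem hh n))

section rV

variable {V : Submonoid L} {f g h : L}

lemma le_rV {a b : ℕ} (hab : (a, b) ≠ (0, 0)) (H : g ^ a ⪯[V] f ^ b) :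
    (a : ℝ≥0∞) / b ≤ rV V f g :=
  le_sSup ⟨a, b, hab, H, rfl⟩

lemma rV_eq_sSup (hg : g ∈ V) (hg' : g⁻¹ ∉ V) :
    rV V f g = sSup {x | ∃ a b : ℕ, b ≠ 0 ∧ g ^ a ⪯[V] f ^ b ∧ x = (a : ℝ≥0∞) / b} := by
  refine congrArg sSup (Set.ext fun x => ⟨?_, ?_⟩)
  · rintro ⟨a, b, hab, H, rfl⟩
    refine ⟨a, b, ?_, H, rfl⟩
    rintro rfl
    have : a ≤ 0 := le_of_pow_valLE_pow hg hg' (by simpa [ValLE] using H)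
    simp_all
  · rintro ⟨a, b, hb, H, rfl⟩
    exact ⟨a, b, by simp [hb], H, rfl⟩

lemma rV_le_natCast_div (hh : h ∈ V) (hh' : h⁻¹ ∉ V) {p q : ℕ} (hpq : (p, q) ≠ (0, 0))
    (H : f ^ q ⪯[V] h ^ p) : rV V f h ≤ p / q := by
  rcases eq_or_ne q 0 with rfl | hq
  · simp_all [div_zero]
  rw [rV_eq_sSup hh hh']
  refine sSup_le ?_
  rintro _ ⟨a, b, hb, H', rfl⟩
  rw [natCast_div_le_natCast_div_iff hb hq, mul_comm]
  exact le_of_pow_valLE_pow hh hh' (H.pow_trans H')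

variable (V) in
lemma rV_one_right (f : L) : rV V f 1 = ⊤ :=
  top_le_iff.1 <| by
    simpa using le_rV (V := V) (f := f) (a := 1) (b := 0) (by simp) (by simp [ValLE])

lemma rV_one_left (hg : g ∈ V) (hg' : g⁻¹ ∉ V) : rV V 1 g = 0 :=
  nonpos_iff_eq_zero.1 <| by
    simpa using rV_le_natCast_div hg hg' (p := 0) (q := 1) (by simp) (by simp [ValLE])

lemma rV_self (hg : g ∈ V) (hg' : g⁻¹ ∉ V) : rV V g g = 1 :=
  le_antisymm (by simpa using rV_le_natCast_div hg hg' (p := 1) (q := 1) (by simp) (.refl _))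
    (by simpa using le_rV (a := 1) (b := 1) (by simp) (.refl _))

lemma rV_mul_rV_le (hg : g ∈ V) (hg' : g⁻¹ ∉ V) (hh : h ∈ V) (hh' : h⁻¹ ∉ V) :
    rV V f g * rV V g h ≤ rV V f h := by
  rw [rV_eq_sSup hg hg', rV_eq_sSup hh hh']
  refine sSup_mul_sSup_le ?_
  rintro _ ⟨a, b, hb, H₁, rfl⟩ _ ⟨c, d, hd, H₂, rfl⟩
  rw [natCast_div_mul_natCast_div a c hb hd]
  exact le_rV (by simp [hb, hd]) (H₁.pow_trans H₂)

lemma inv_rV_le (hval : ∀ x : L, x ∈ V ∨ x⁻¹ ∈ V) (f g : L) : (rV V f g)⁻¹ ≤ rV V g f := by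
  refine le_of_forall_lt fun z hz => ?_
  obtain ⟨p, q, hq, hlt, hpz⟩ := exists_natCast_div_btwn (ENNReal.lt_inv_iff_lt_inv.1 hz)
  have hp : p ≠ 0 := by rintro rfl; simp at hlt
  have H : f ^ q ⪯[V] g ^ p :=
    (valLE_total hval _ _).resolve_left fun H => hlt.not_ge (le_rV (by simp [hq]) H)
  calc z < ((p : ℝ≥0∞) / q)⁻¹ := ENNReal.lt_inv_iff_lt_inv.1 hpz
    _ = q / p := ENNReal.inv_div (.inl (natCast_ne_top _)) (.inl (by simpa))
    _ ≤ rV V g f := le_rV (by simp [hp]) H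

lemma rV_swap (hval : ∀ x : L, x ∈ V ∨ x⁻¹ ∈ V) (hf : f ∈ V) (hf' : f⁻¹ ∉ V) (hg : g ∈ V)
    (hg' : g⁻¹ ∉ V) : rV V g f = (rV V f g)⁻¹ :=
  le_antisymm
    (ENNReal.le_inv_iff_mul_le.2 ((rV_mul_rV_le hf hf' hg hg').trans (rV_self hg hg').le))
    (inv_rV_le hval f g)

lemma rV_mul_rV (hval : ∀ x : L, x ∈ V ∨ x⁻¹ ∈ V) (hg : g ∈ V) (hg' : g⁻¹ ∉ V) (hh : h ∈ V)
    (hh' : h⁻¹ ∉ V) (hex : ¬((rV V f g = 0 ∧ rV V g h = ⊤) ∨ (rV V f g = ⊤ ∧ rV V g h = 0))) :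
    rV V f g * rV V g h = rV V f h := by
  refine le_antisymm (rV_mul_rV_le hg hg' hh hh') ?_
  have key : rV V f h / rV V g h ≤ rV V f g := by
    rw [div_eq_mul_inv, ← rV_swap hval hg hg' hh hh']
    exact rV_mul_rV_le hh hh' hg hg'
  rcases eq_or_ne (rV V g h) 0 with h0 | h0
  · have hfh : rV V f h = 0 := by
      by_contra hne
      rw [h0, ENNReal.div_zero hne, top_le_iff] at key
      exact hex (.inr ⟨key, h0⟩)
    simp [hfh]
  rcases eq_or_ne (rV V g h) ⊤ with ht | ht
  · rw [ht, ENNReal.mul_top fun e => hex (.inl ⟨e, ht⟩)]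
    exact le_top
  exact (ENNReal.div_le_iff h0 ht).1 key

lemma rV_mul_eq_add (hval : ∀ x : L, x ∈ V ∨ x⁻¹ ∈ V) (hf : f ∈ V) (hg : g ∈ V) (hh : h ∈ V)
    (hh' : h⁻¹ ∉ V) : rV V (f * g) h = rV V f h + rV V g h := by
  refine le_antisymm ?_ ?_
  · refine le_trans (le_inv_sSup_add_inv_sSup ?_)
      (add_le_add (inv_rV_le hval h f) (inv_rV_le hval h g))
    rintro _ ⟨a, b, hab, (H₁ : f ^ a ⪯[V] h ^ b), rfl⟩
      _ ⟨c, d, hcd, (H₂ : g ^ c ⪯[V] h ^ d), rfl⟩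
    rcases eq_or_ne a 0 with rfl | ha
    · simp_all
    rcases eq_or_ne c 0 with rfl | hc
    · simp_all
    rw [ENNReal.inv_div (.inl (natCast_ne_top _)) (.inr (by simpa)),
      ENNReal.inv_div (.inl (natCast_ne_top _)) (.inr (by simpa)),
      natCast_div_add_natCast_div b d ha hc]
    refine rV_le_natCast_div hh hh' (by simp [ha, hc]) ?_
    calc (f * g) ^ (a * c) = (f ^ a) ^ c * (g ^ c) ^ a := by
          rw [mul_pow, ← pow_mul, ← pow_mul, mul_comm c a]
      _ ⪯[V] (h ^ b) ^ c * (h ^ d) ^ a := (H₁.pow c).mul (H₂.pow a)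
      _ = h ^ (b * c + a * d) := by rw [← pow_mul, ← pow_mul, ← pow_add, mul_comm d a]
  · rw [rV_eq_sSup hh hh', rV_eq_sSup hh hh', rV_eq_sSup hh hh']
    refine sSup_add_sSup_le ?_ ?_ ?_
    · exact ⟨0, 0, 1, one_ne_zero, by simpa [ValLE], by simp⟩
    · exact ⟨0, 0, 1, one_ne_zero, by simpa [ValLE], by simp⟩
    rintro _ ⟨a, b, hb, H₁, rfl⟩ _ ⟨c, d, hd, H₂, rfl⟩
    rw [natCast_div_add_natCast_div a c hb hd]
    refine le_sSup ⟨a * d + b * c, b * d, mul_ne_zero hb hd, ?_, rfl⟩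
    calc h ^ (a * d + b * c) = (h ^ a) ^ d * (h ^ c) ^ b := by
          rw [← pow_mul, ← pow_mul, ← pow_add, mul_comm c b]
      _ ⪯[V] (f ^ b) ^ d * (g ^ d) ^ b := (H₁.pow d).mul (H₂.pow b)
      _ = (f * g) ^ (b * d) := by rw [mul_pow, ← pow_mul, ← pow_mul, mul_comm d b]

end rV

end ValuativeRatio

theorem statement6_general {L : Type*} [CommGroup L] (S : Submonoid L)
    (V : Submonoid L)
    (hval : ∀ x : L, x ∈ V ∨ x⁻¹ ∈ V)
    (hSV : S ≤ V)
    (hunit : ∀ x : L, x ∈ S → x ∈ V → x⁻¹ ∈ V → x = 1) :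
    (∀ f g : L, f ∈ S → g ∈ S → (f, g) ≠ (1, 1) →
      rV V g f = (rV V f g)⁻¹) ∧
    (∀ f g h : L, f ∈ S → g ∈ S → h ∈ S →
      (f, g) ≠ (1, 1) → (g, h) ≠ (1, 1) → (f, h) ≠ (1, 1) →
      ¬((rV V f g = 0 ∧ rV V g h = ⊤) ∨ (rV V f g = ⊤ ∧ rV V g h = 0)) →
      rV V f g * rV V g h = rV V f h) ∧
    (∀ f g h : L, f ∈ S → g ∈ S → h ∈ S →
      (f, h) ≠ (1, 1) → (g, h) ≠ (1, 1) → (f * g, h) ≠ (1, 1) →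
      rV V (f * g) h = rV V f h + rV V g h) := by
  have inv_not_mem {x : L} (hx : x ∈ S) (hx1 : x ≠ 1) : x⁻¹ ∉ V :=
    fun hinv => hx1 (hunit x hx (hSV hx) hinv)
  refine ⟨fun f g hf hg hfg => ?_, fun f g h _ hg hh _ hgh _ hex => ?_,
    fun f g h hf hg hh _ _ _ => ?_⟩
  · rcases eq_or_ne f 1 with rfl | hf1
    · rw [rV_one_right, rV_one_left (hSV hg) (inv_not_mem hg (by simpa using hfg)),
        ENNReal.inv_zero]
    rcases eq_or_ne g 1 with rfl | hg1
    · rw [rV_one_right, rV_one_left (hSV hf) (inv_not_mem hf hf1), ENNReal.inv_top]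
    exact rV_swap hval (hSV hf) (inv_not_mem hf hf1) (hSV hg) (inv_not_mem hg hg1)
  · rcases eq_or_ne h 1 with rfl | hh1
    · rw [rV_one_right, rV_one_right,
        ENNReal.mul_top fun e => hex (.inl ⟨e, rV_one_right V g⟩)]
    have hg1 : g ≠ 1 := by
      rintro rfl
      exact hex (.inr ⟨rV_one_right V f, rV_one_left (hSV hh) (inv_not_mem hh hh1)⟩)
    exact rV_mul_rV hval (hSV hg) (inv_not_mem hg hg1) (hSV hh) (inv_not_mem hh hh1) hex
  · rcases eq_or_ne h 1 with rfl | hh1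
    · simp [rV_one_right]
    exact rV_mul_eq_add hval (hSV hf) (hSV hg) (hSV hh) (inv_not_mem hh hh1)

/-- Let `𝒮` be a sharp fs monoid, realized as a submonoid `S` of its group
completion `L`, and let `V ∈ V(𝒮)`, i.e. a valuative submonoid of `L`
containing `S` with `V^× ∩ S = {1}`. Then `r_V ∈ R(𝒮)`: it satisfies
`r_V(g,f) = r_V(f,g)⁻¹`; `r_V(f,g)·r_V(g,h) = r_V(f,h)` whenever
`{r_V(f,g), r_V(g,h)} ≠ {0,∞}`; and `r_V(fg,h) = r_V(f,h) + r_V(g,h)`. -/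
theorem statement6 {L : Type*} [CommGroup L] (S : Submonoid L)
    (hgen : ∀ x : L, ∃ p ∈ S, ∃ q ∈ S, x = p * q⁻¹)
    (hfg : S.FG)
    (hsat : ∀ x : L, (∃ n : ℕ, 1 ≤ n ∧ x ^ n ∈ S) → x ∈ S)
    (hsharp : ∀ x : L, x ∈ S → x⁻¹ ∈ S → x = 1)
    (V : Submonoid L)
    (hval : ∀ x : L, x ∈ V ∨ x⁻¹ ∈ V)
    (hSV : S ≤ V)
    (hunit : ∀ x : L, x ∈ S → x ∈ V → x⁻¹ ∈ V → x = 1) :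
    (∀ f g : L, f ∈ S → g ∈ S → (f, g) ≠ (1, 1) →
      rV V g f = (rV V f g)⁻¹) ∧
    (∀ f g h : L, f ∈ S → g ∈ S → h ∈ S →
      (f, g) ≠ (1, 1) → (g, h) ≠ (1, 1) → (f, h) ≠ (1, 1) →
      ¬((rV V f g = 0 ∧ rV V g h = ⊤) ∨ (rV V f g = ⊤ ∧ rV V g h = 0)) →
      rV V f g * rV V g h = rV V f h) ∧
    (∀ f g h : L, f ∈ S → g ∈ S → h ∈ S →
      (f, h) ≠ (1, 1) → (g, h) ≠ (1, 1) → (f * g, h) ≠ (1, 1) →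
      rV V (f * g) h = rV V f h + rV V g h) :=
  statement6_general S V hval hSV hunit
end

section
/- Let 𝒮 be a sharp fs monoid. The map V(𝒮) → R(𝒮), V ↦ r_V, is surjective: every r ∈ R(𝒮) arises as r_V for some valuative submonoid V of 𝒮^gp with V ⊇ 𝒮 and V^× ∩ 𝒮 = {1}. -/
open scoped ENNReal

/-- `a = a⁻¹` in `ℝ≥0∞` forces `a = 1`. -/
lemma ennreal_eq_inv_self {a : ℝ≥0∞} (h : a = a⁻¹) : a = 1 := by
  rcases lt_trichotomy a 1 with h1 | h1 | h1
  · have h2 : 1 < a := ENNReal.inv_lt_one.mp (h ▸ h1 : a⁻¹ < 1)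
    exact absurd h1 (not_lt.mpr h2.le)
  · exact h1
  · have h2 : a⁻¹ < 1⁻¹ := ENNReal.inv_lt_inv.mpr h1
    rw [← h, inv_one] at h2
    exact absurd h1 (not_lt.mpr h2.le)

/-- Extension of an additive-valued "character" from a subgroup of a commutative
group to the whole group, using that `ℝ` is divisible (injective `ℤ`-module). -/
lemma exists_extension_hom {L : Type*} [CommGroup L] (H : Subgroup L) (φ : ↥H → ℝ)
    (hφ : ∀ x y : ↥H, φ (x * y) = φ x + φ y) :
    ∃ ψ : L → ℝ, (∀ x y : L, ψ (x * y) = ψ x + ψ y) ∧ ∀ x : ↥H, ψ (x : L) = φ x := by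
  have hb : Module.Baer ℤ ℝ := Module.Baer.of_divisible ℝ
  have hinj : Function.Injective
      (AddMonoidHom.mk' (fun x : Additive ↥H => Additive.ofMul ((x.toMul : L)))
        (fun a b => rfl)) := by
    intro a b h
    exact congrArg Additive.ofMul (Subtype.coe_injective (congrArg Additive.toMul h))
  obtain ⟨Ψ, hΨ⟩ := hb.extension_property_addMonoidHom _ hinj
    (AddMonoidHom.mk' (fun x : Additive ↥H => φ x.toMul) (fun a b => hφ _ _))
  refine ⟨fun x => Ψ (Additive.ofMul x), fun x y => Ψ.map_add _ _, fun x => ?_⟩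
  exact congrFun (congrArg (fun (f : Additive ↥H →+ ℝ) => (f : Additive ↥H → ℝ)) hΨ)
    (Additive.ofMul x)

theorem statement7_aux {L : Type*} [CommGroup L] (S : Submonoid L)
    (hsharp : ∀ x : L, x ∈ S → x⁻¹ ∈ S → x = 1)
    (r : L → L → ℝ≥0∞)
    (hr1 : ∀ f g : L, f ∈ S → g ∈ S → (f, g) ≠ (1, 1) →
      r g f = (r f g)⁻¹)
    (hr2 : ∀ f g h : L, f ∈ S → g ∈ S → h ∈ S →
      (f, g) ≠ (1, 1) → (g, h) ≠ (1, 1) → (f, h) ≠ (1, 1) →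
      ¬((r f g = 0 ∧ r g h = ⊤) ∨ (r f g = ⊤ ∧ r g h = 0)) →
      r f g * r g h = r f h)
    (hr3 : ∀ f g h : L, f ∈ S → g ∈ S → h ∈ S →
      (f, h) ≠ (1, 1) → (g, h) ≠ (1, 1) → (f * g, h) ≠ (1, 1) →
      r (f * g) h = r f h + r g h) :
    ∀ n : ℕ, ∀ G : Finset L, G.card ≤ n → (G : Set L) ⊆ (S : Set L) →
    ∃ V : Submonoid L, (∀ x : L, x ∈ V ∨ x⁻¹ ∈ V) ∧
      Submonoid.closure (G : Set L) ≤ V ∧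
      (∀ x ∈ Submonoid.closure (G : Set L), x ∈ V → x⁻¹ ∈ V → x = 1) ∧
      ∀ f g : L, f ∈ Submonoid.closure (G : Set L) → g ∈ Submonoid.closure (G : Set L) →
        (f, g) ≠ (1, 1) → r f g = rV V f g := by
  -- general facts about `r`
  have hself : ∀ h : L, h ∈ S → h ≠ 1 → r h h = 1 := by
    intro h hS hne
    exact ennreal_eq_inv_self (hr1 h h hS hS (fun hc => hne (Prod.ext_iff.mp hc).1))
  have hone : ∀ h : L, h ∈ S → h ≠ 1 → r 1 h = 0 := by
    intro h hS hne
    have hpne : ∀ x : L, (x, h) ≠ ((1 : L), (1 : L)) :=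
      fun x hc => hne (Prod.ext_iff.mp hc).2
    have h3 := hr3 h 1 h hS S.one_mem hS (hpne h) (hpne 1) (by rw [mul_one]; exact hpne h)
    rw [mul_one, hself h hS hne] at h3
    have h4 : (1 : ℝ≥0∞) + 0 = 1 + r 1 h := by rw [add_zero]; exact h3
    exact ((ENNReal.add_right_inj (by simp)).mp h4).symm
  have honetop : ∀ h : L, h ∈ S → h ≠ 1 → r h 1 = ⊤ := by
    intro h hS hne
    have := hr1 1 h S.one_mem hS (fun hc => hne (Prod.ext_iff.mp hc).2)
    rw [this, hone h hS hne]
    simp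
  intro n
  induction n with
  | zero =>
    intro G hcard hGS
    have hG : G = ∅ := Finset.card_eq_zero.mp (Nat.le_zero.mp hcard)
    subst hG
    refine ⟨⊤, fun x => Or.inl trivial, le_top, ?_, ?_⟩
    · intro x hx _ _
      simpa using hx
    · intro f g hf hg hne
      exact absurd (by simp [show f = 1 by simpa using hf, show g = 1 by simpa using hg]) hne
  | succ n IH =>
    intro G hcard hGS
    classical
    by_cases htriv : ∀ g ∈ G, g = (1 : L)
    · refine ⟨⊤, fun x => Or.inl trivial, le_top, ?_, ?_⟩
      · intro x hx _ _
        have hle : Submonoid.closure (G : Set L) ≤ ⊥ :=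
          Submonoid.closure_le.mpr (fun g hg => Submonoid.mem_bot.mpr (htriv g hg))
        exact Submonoid.mem_bot.mp (hle hx)
      · intro f g hf hg hne
        have hle : Submonoid.closure (G : Set L) ≤ ⊥ :=
          Submonoid.closure_le.mpr (fun g hg => Submonoid.mem_bot.mpr (htriv g hg))
        exact absurd (by
          simp [Submonoid.mem_bot.mp (hle hf), Submonoid.mem_bot.mp (hle hg)]) hne
    push_neg at htriv
    obtain ⟨g₀, hg₀G, hg₀1⟩ := htriv
    set T := Submonoid.closure (G : Set L) with hTdef
    have hTS : ∀ {x : L}, x ∈ T → x ∈ S := fun hx =>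
      Submonoid.closure_le.mpr hGS hx
    -- the element f₀ = product of all generators
    set f₀ : L := ∏ g ∈ G, g with hf₀def
    have hf₀T : f₀ ∈ T := Submonoid.prod_mem _ (fun g hg => Submonoid.subset_closure hg)
    have hf₀1 : f₀ ≠ 1 := by
      intro h1
      have hP : g₀ * ∏ g ∈ G.erase g₀, g = f₀ := Finset.mul_prod_erase G id hg₀G
      have hPS : (∏ g ∈ G.erase g₀, g) ∈ S :=
        Submonoid.prod_mem _ (fun g hg => hGS (Finset.erase_subset _ _ hg))
      have : (∏ g ∈ G.erase g₀, g) = g₀⁻¹ :=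
        eq_inv_of_mul_eq_one_left (by rw [mul_comm]; rw [hP, h1])
      exact hg₀1 (hsharp g₀ (hGS hg₀G) (this ▸ hPS))
    have hpf₀ : ∀ x : L, (x, f₀) ≠ ((1 : L), (1 : L)) :=
      fun x hc => hf₀1 (Prod.ext_iff.mp hc).2
    -- additivity of r(·, f₀) on T
    have hadd : ∀ t ∈ T, ∀ u ∈ T, r (t * u) f₀ = r t f₀ + r u f₀ := by
      intro t ht u hu
      exact hr3 t u f₀ (hTS ht) (hTS hu) (hTS hf₀T) (hpf₀ t) (hpf₀ u) (hpf₀ (t * u))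
    -- finiteness of r(·, f₀) on T
    have hgenfin : ∀ g ∈ G, r g f₀ ≠ ⊤ := by
      intro g hg
      by_cases hg1 : g = (1 : L)
      · rw [hg1, hone f₀ (hTS hf₀T) hf₀1]
        simp
      · have hP : g * ∏ x ∈ G.erase g, x = f₀ := Finset.mul_prod_erase G id hg
        have hPT : (∏ x ∈ G.erase g, x) ∈ T :=
          Submonoid.prod_mem _ (fun x hx =>
            Submonoid.subset_closure (Finset.erase_subset _ _ hx))
        have hpg : ∀ x : L, (x, g) ≠ ((1 : L), (1 : L)) :=
          fun x hc => hg1 (Prod.ext_iff.mp hc).2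
        have hsplit : r f₀ g = r g g + r (∏ x ∈ G.erase g, x) g := by
          rw [← hP]
          exact hr3 g (∏ x ∈ G.erase g, x) g (hGS hg) (hTS hPT) (hGS hg)
            (hpg g) (hpg _) (hpg _)
        have hne0 : r f₀ g ≠ 0 := by
          rw [hsplit, hself g (hGS hg) hg1]
          intro hc
          exact one_ne_zero (add_eq_zero.mp hc).1
        have h1 := hr1 f₀ g (hTS hf₀T) (hGS hg) (fun hc => hf₀1 (Prod.ext_iff.mp hc).1)
        rw [h1]
        intro hc
        exact hne0 (ENNReal.inv_eq_top.mp hc)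
    have hfin : ∀ t ∈ T, r t f₀ ≠ ⊤ := by
      intro t ht
      induction ht using Submonoid.closure_induction with
      | mem g hg => exact hgenfin g hg
      | one => rw [hone f₀ (hTS hf₀T) hf₀1]; simp
      | mul a b ha hb iha ihb =>
        rw [hadd a ha b hb]
        exact ENNReal.add_ne_top.mpr ⟨iha, ihb⟩
    -- the real-valued additive map N on T
    set N : L → ℝ := fun x => (r x f₀).toReal with hNdef
    have hNmul : ∀ t ∈ T, ∀ u ∈ T, N (t * u) = N t + N u := by
      intro t ht u hu
      show (r (t * u) f₀).toReal = (r t f₀).toReal + (r u f₀).toReal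
      rw [hadd t ht u hu]
      exact ENNReal.toReal_add (hfin t ht) (hfin u hu)
    have hNzero : ∀ t ∈ T, (N t = 0 ↔ r t f₀ = 0) := by
      intro t ht
      constructor
      · intro h
        rcases ENNReal.toReal_eq_zero_iff _ |>.mp h with h | h
        · exact h
        · exact absurd h (hfin t ht)
      · intro h; show (r t f₀).toReal = 0; rw [h]; simp
    have hN1 : N 1 = 0 := by
      show (r 1 f₀).toReal = 0
      rw [hone f₀ (hTS hf₀T) hf₀1]; simp
    -- some generator has nonzero value
    have hex : ∃ g₁ ∈ G, r g₁ f₀ ≠ 0 := by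
      by_contra hcon
      push_neg at hcon
      have hzero : ∀ t ∈ T, r t f₀ = 0 := by
        intro t ht
        induction ht using Submonoid.closure_induction with
        | mem g hg => exact hcon g hg
        | one => exact hone f₀ (hTS hf₀T) hf₀1
        | mul a b ha hb iha ihb => rw [hadd a ha b hb, iha, ihb, add_zero]
      have := hzero f₀ hf₀T
      rw [hself f₀ (hTS hf₀T) hf₀1] at this
      exact one_ne_zero this
    obtain ⟨g₁, hg₁G, hg₁0⟩ := hex
    -- the smaller generating set
    set G' : Finset L := G.filter (fun g => r g f₀ = 0) with hG'def
    have hG'S : (G' : Set L) ⊆ (S : Set L) := by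
      intro g hg
      exact hGS (Finset.filter_subset _ _ hg)
    have hG'card : G'.card ≤ n := by
      have hss : G' ⊂ G := by
        refine ⟨Finset.filter_subset _ _, fun hsub => ?_⟩
        have := hsub hg₁G
        rw [hG'def, Finset.mem_filter] at this
        exact hg₁0 this.2
      have := Finset.card_lt_card hss
      omega
    set T' := Submonoid.closure (G' : Set L) with hT'def
    have hface : ∀ t ∈ T, r t f₀ = 0 → t ∈ T' := by
      intro t ht
      induction ht using Submonoid.closure_induction with
      | mem g hg =>
        intro h0
        exact Submonoid.subset_closure (Finset.mem_filter.mpr ⟨hg, h0⟩)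
      | one => intro _; exact Submonoid.one_mem _
      | mul a b ha hb iha ihb =>
        intro h0
        rw [hadd a ha b hb] at h0
        exact Submonoid.mul_mem _ (iha (add_eq_zero.mp h0).1) (ihb (add_eq_zero.mp h0).2)
    obtain ⟨V', tot', le', sharp', req'⟩ := IH G' hG'card hG'S
    -- the ambient subgroup generated by G, and representations t * u⁻¹
    set H : Subgroup L := Subgroup.closure (G : Set L) with hHdef
    have hTH : ∀ t ∈ T, t ∈ H := by
      intro t ht
      have : T ≤ H.toSubmonoid :=
        Submonoid.closure_le.mpr (fun g hg => Subgroup.subset_closure hg)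
      exact this ht
    have hHrep : ∀ x ∈ H, ∃ t u : L, t ∈ T ∧ u ∈ T ∧ x = t * u⁻¹ := by
      intro x hx
      induction hx using Subgroup.closure_induction with
      | mem g hg => exact ⟨g, 1, Submonoid.subset_closure hg, Submonoid.one_mem _, by simp⟩
      | one => exact ⟨1, 1, Submonoid.one_mem _, Submonoid.one_mem _, by simp⟩
      | mul a b ha hb iha ihb =>
        obtain ⟨t, u, ht, hu, he⟩ := iha
        obtain ⟨t', u', ht', hu', he'⟩ := ihb
        exact ⟨t * t', u * u', Submonoid.mul_mem _ ht ht', Submonoid.mul_mem _ hu hu',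
          by rw [he, he', mul_inv]; exact mul_mul_mul_comm t u⁻¹ t' u'⁻¹⟩
      | inv a ha iha =>
        obtain ⟨t, u, ht, hu, he⟩ := iha
        exact ⟨u, t, hu, ht, by rw [he, mul_inv, inv_inv, mul_comm]⟩
    have hrep' : ∀ x : ↥H, ∃ t u : L, t ∈ T ∧ u ∈ T ∧ (x : L) = t * u⁻¹ :=
      fun x => hHrep x x.2
    choose pt pu hpt hpu hpe using hrep'
    set φ : ↥H → ℝ := fun x => N (pt x) - N (pu x) with hφdef
    have hwd : ∀ (x : ↥H) (t u : L), t ∈ T → u ∈ T → (x : L) = t * u⁻¹ →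
        φ x = N t - N u := by
      intro x t u ht hu he
      have hcross : pt x * u = t * pu x := by
        have h1 : pt x * (pu x)⁻¹ = t * u⁻¹ := (hpe x).symm.trans he
        rw [← div_eq_mul_inv, ← div_eq_mul_inv, div_eq_div_iff_mul_eq_mul] at h1
        exact h1
      have h2 : N (pt x) + N u = N t + N (pu x) := by
        rw [← hNmul _ (hpt x) _ hu, ← hNmul _ ht _ (hpu x), hcross]
      show N (pt x) - N (pu x) = N t - N u
      linarith
    have hφmul : ∀ x y : ↥H, φ (x * y) = φ x + φ y := by
      intro x y
      have he : ((x * y : ↥H) : L) = (pt x * pt y) * (pu x * pu y)⁻¹ := by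
        push_cast
        rw [hpe x, hpe y, mul_inv]
        exact mul_mul_mul_comm (pt x) (pu x)⁻¹ (pt y) (pu y)⁻¹
      rw [hwd (x * y) _ _ (Submonoid.mul_mem _ (hpt x) (hpt y))
        (Submonoid.mul_mem _ (hpu x) (hpu y)) he,
        hNmul _ (hpt x) _ (hpt y), hNmul _ (hpu x) _ (hpu y)]
      show _ = (N (pt x) - N (pu x)) + (N (pt y) - N (pu y))
      ring
    obtain ⟨ψ, hψmul, hψH⟩ := exists_extension_hom H φ hφmul
    have hψT : ∀ t ∈ T, ψ t = N t := by
      intro t ht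
      have h1 := hψH ⟨t, hTH t ht⟩
      rw [h1, hwd ⟨t, hTH t ht⟩ t 1 ht (Submonoid.one_mem _) (by simp), hN1, sub_zero]
    have hψ1 : ψ 1 = 0 := by
      have := hψmul 1 1
      rw [mul_one] at this
      linarith
    have hψinv : ∀ x : L, ψ x⁻¹ = -ψ x := by
      intro x
      have := hψmul x x⁻¹
      rw [mul_inv_cancel, hψ1] at this
      linarith
    have hψpow : ∀ (x : L) (k : ℕ), ψ (x ^ k) = k * ψ x := by
      intro x k
      induction k with
      | zero => simpa using hψ1
      | succ k ihk => rw [pow_succ, hψmul, ihk]; push_cast; ring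
    -- the valuative submonoid
    set V : Submonoid L :=
      { carrier := {x : L | 0 < ψ x ∨ (ψ x = 0 ∧ x ∈ V')}
        one_mem' := Or.inr ⟨hψ1, Submonoid.one_mem _⟩
        mul_mem' := by
          rintro a b (ha | ⟨ha0, haV⟩) (hb | ⟨hb0, hbV⟩)
          · exact Or.inl (by rw [hψmul]; linarith)
          · exact Or.inl (by rw [hψmul]; linarith)
          · exact Or.inl (by rw [hψmul]; linarith)
          · exact Or.inr ⟨by rw [hψmul, ha0, hb0, add_zero], Submonoid.mul_mem _ haV hbV⟩ }
      with hVdef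
    have hVmem : ∀ x : L, x ∈ V ↔ (0 < ψ x ∨ (ψ x = 0 ∧ x ∈ V')) := fun x => Iff.rfl
    have hNnonneg : ∀ x : L, 0 ≤ N x := fun x => ENNReal.toReal_nonneg
    refine ⟨V, ?_, ?_, ?_, ?_⟩
    · -- totality
      intro x
      rcases lt_trichotomy (ψ x) 0 with hx | hx | hx
      · exact Or.inr (Or.inl (by rw [hψinv]; linarith))
      · rcases tot' x with hx' | hx'
        · exact Or.inl (Or.inr ⟨hx, hx'⟩)
        · exact Or.inr (Or.inr ⟨by rw [hψinv, hx, neg_zero], hx'⟩)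
      · exact Or.inl (Or.inl hx)
    · -- T ≤ V
      intro t ht
      rcases eq_or_lt_of_le (hNnonneg t) with h0 | h0
    
      · refine Or.inr ⟨by rw [hψT t ht, ← h0], ?_⟩
        exact le' (hface t ht ((hNzero t ht).mp h0.symm))
      · exact Or.inl (by rw [hψT t ht]; exact h0)
    · -- sharpness
      intro x hxT hxV hxiV
      have hx0 : ψ x = 0 := by
        rcases hxV with h | h
        · rcases hxiV with h' | h'
          · rw [hψinv] at h'; linarith
          · rw [hψinv] at h'; linarith
        · exact h.1
      have hxV' : x ∈ V' := by
        rcases hxV with h | h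
        · rw [hx0] at h; exact absurd h (lt_irrefl 0)
        · exact h.2
      have hxiV' : x⁻¹ ∈ V' := by
        rcases hxiV with h | h
        · rw [hψinv, hx0, neg_zero] at h; exact absurd h (lt_irrefl 0)
        · exact h.2
      have hxT' : x ∈ T' := hface x hxT ((hNzero x hxT).mp (by rw [← hψT x hxT]; exact hx0))
      exact sharp' x hxT' hxV' hxiV'
    · -- the ratio computation
      intro f g hf hg hne
      have hψz : ∀ a b : ℕ, ψ (f ^ b * (g ^ a)⁻¹) = (b : ℝ) * ψ f - (a : ℝ) * ψ g := by
        intro a b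
        rw [hψmul, hψinv, hψpow, hψpow]
        ring
      have hψf : ψ f = N f := hψT f hf
      have hψg : ψ g = N g := hψT g hg
      by_cases hcA : r f f₀ = 0 ∧ r g f₀ = 0
      · -- both infinitesimal: defer to V'
        have hfT' : f ∈ T' := hface f hf hcA.1
        have hgT' : g ∈ T' := hface g hg hcA.2
        have hψf0 : ψ f = 0 := by rw [hψf]; exact (hNzero f hf).mpr hcA.1
        have hψg0 : ψ g = 0 := by rw [hψg]; exact (hNzero g hg).mpr hcA.2
        have hmemiff : ∀ a b : ℕ, (f ^ b * (g ^ a)⁻¹ ∈ V ↔ f ^ b * (g ^ a)⁻¹ ∈ V') := by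
          intro a b
          have h0 : ψ (f ^ b * (g ^ a)⁻¹) = 0 := by rw [hψz, hψf0, hψg0]; ring
          rw [hVmem, h0]
          simp
        rw [req' f g hfT' hgT' hne, rV, rV]
        congr 1
        ext x
        simp only [Set.mem_setOf_eq]
        constructor
        · rintro ⟨a, b, h1, h2, h3⟩
          exact ⟨a, b, h1, (hmemiff a b).mpr h2, h3⟩
        · rintro ⟨a, b, h1, h2, h3⟩
          exact ⟨a, b, h1, (hmemiff a b).mp h2, h3⟩
      · by_cases hg0 : r g f₀ = 0
        · -- denominator infinitesimal: ratio is ⊤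
          have hf0 : r f f₀ ≠ 0 := fun h => hcA ⟨h, hg0⟩
          have hNf : 0 < N f := ENNReal.toReal_pos hf0 (hfin f hf)
          have hψg0 : ψ g = 0 := by rw [hψg]; exact (hNzero g hg).mpr hg0
          have hgfne : ((g, f) : L × L) ≠ (1, 1) := by
            intro hc
            exact hne (by rw [Prod.ext_iff] at hc ⊢; exact ⟨hc.2, hc.1⟩)
          have h2 := hr2 g f f₀ (hTS hg) (hTS hf) (hTS hf₀T) hgfne (hpf₀ f) (hpf₀ g)
            (by rintro (⟨_, h⟩ | ⟨_, h⟩); exacts [hfin f hf h, hf0 h])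
          rw [hg0] at h2
          have hgf0 : r g f = 0 := by
            rcases mul_eq_zero.mp h2 with h | h
            · exact h
            · exact absurd h hf0
          have hfgtop : r f g = ⊤ := by
            have h1 := hr1 f g (hTS hf) (hTS hg) hne
            rw [hgf0] at h1
            exact ENNReal.inv_eq_zero.mp h1.symm
          have hmem : ∀ a : ℕ, (a : ℝ≥0∞) ∈ {x : ℝ≥0∞ | ∃ a' b : ℕ, (a', b) ≠ (0, 0) ∧
              f ^ b * (g ^ a')⁻¹ ∈ V ∧ x = (a' : ℝ≥0∞) / (b : ℝ≥0∞)} := by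
            intro a
            refine ⟨a, 1, by simp, ?_, by simp⟩
            refine Or.inl ?_
            rw [hψz, hψf, hψg0]
            push_cast
            nlinarith
          rw [hfgtop, rV, eq_comm, ← top_le_iff, ← ENNReal.iSup_natCast]
          exact iSup_le fun a => le_sSup (hmem a)
        · -- generic case: finite positive denominator
          have hNg : 0 < N g := ENNReal.toReal_pos hg0 (hfin g hg)
          have h2 := hr2 f g f₀ (hTS hf) (hTS hg) (hTS hf₀T) hne (hpf₀ g) (hpf₀ f)
            (by rintro (⟨_, h⟩ | ⟨_, h⟩); exacts [hfin g hg h, hg0 h])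
          have hfg_eq : r f g = ENNReal.ofReal (N f / N g) := by
            calc r f g = r f f₀ / r g f₀ :=
                  (ENNReal.eq_div_iff hg0 (hfin g hg)).mpr (by rw [mul_comm]; exact h2)
            _ = ENNReal.ofReal (N f) / ENNReal.ofReal (N g) := by
                  rw [← ENNReal.ofReal_toReal (hfin f hf), ← ENNReal.ofReal_toReal (hfin g hg)]
            _ = ENNReal.ofReal (N f / N g) := (ENNReal.ofReal_div_of_pos hNg).symm
          have hψzval : ∀ a b : ℕ, ψ (f ^ b * (g ^ a)⁻¹) = (b : ℝ) * N f - (a : ℝ) * N g := by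
            intro a b
            rw [hψz, hψf, hψg]
          rw [hfg_eq, rV]
          apply le_antisymm
          · -- lower bound on the sup
            refine le_of_forall_lt fun y hy => ?_
            have hytop : y ≠ ⊤ := (hy.trans ENNReal.ofReal_lt_top).ne
            have hβ : y.toReal < N f / N g := (ENNReal.lt_ofReal_iff_toReal_lt hytop).mp hy
            obtain ⟨q, hq1, hq2⟩ := exists_rat_btwn hβ
            have hq0 : (0 : ℝ) ≤ (q : ℝ) := le_trans ENNReal.toReal_nonneg hq1.le
            have hqnum : 0 ≤ q.num := Rat.num_nonneg.mpr (by exact_mod_cast hq0)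
            have hbpos : (0 : ℝ) < (q.den : ℝ) := by exact_mod_cast q.den_pos
            have hcast : ((q.num.toNat : ℝ)) / (q.den : ℝ) = (q : ℝ) := by
              rw [Rat.cast_def]
              congr 1
              exact_mod_cast Int.toNat_of_nonneg hqnum
            have hzpos : (0 : ℝ) < ψ (f ^ q.den * (g ^ q.num.toNat)⁻¹) := by
              rw [hψz, hψf, hψg]
              have hlt : ((q.num.toNat : ℝ)) / (q.den : ℝ) < N f / N g := by
                rw [hcast]; exact hq2
              rw [div_lt_div_iff₀ hbpos hNg] at hlt
              nlinarith
            have hx₀mem : ((q.num.toNat : ℝ≥0∞)) / ((q.den : ℕ) : ℝ≥0∞) ∈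
                {x : ℝ≥0∞ | ∃ a b : ℕ, (a, b) ≠ (0, 0) ∧ f ^ b * (g ^ a)⁻¹ ∈ V ∧
                  x = (a : ℝ≥0∞) / (b : ℝ≥0∞)} := by
              refine ⟨q.num.toNat, q.den, ?_, Or.inl hzpos, rfl⟩
              intro hc
              have := (Prod.ext_iff.mp hc).2
              exact absurd this (by simpa using q.den_pos.ne')
            refine lt_of_lt_of_le ?_ (le_sSup hx₀mem)
            rw [show ((q.num.toNat : ℕ) : ℝ≥0∞) = ENNReal.ofReal ((q.num.toNat : ℕ) : ℝ) by
                rw [ENNReal.ofReal_natCast],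
              show ((q.den : ℕ) : ℝ≥0∞) = ENNReal.ofReal ((q.den : ℕ) : ℝ) by
                rw [ENNReal.ofReal_natCast],
              ← ENNReal.ofReal_div_of_pos hbpos]
            rw [ENNReal.lt_ofReal_iff_toReal_lt hytop, hcast]
            exact hq1
          · -- upper bound on the sup
            refine sSup_le ?_
            rintro x ⟨a, b, hab, hmem, hx⟩
            have hge : (0 : ℝ) ≤ (b : ℝ) * N f - (a : ℝ) * N g := by
              rcases (hVmem _).mp hmem with h | h
              · rw [hψzval] at h; linarith
              · rw [hψzval] at h; linarith [h.1.ge, h.1.le]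
            have hb : b ≠ 0 := by
              intro hb0
              subst hb0
              have ha : a ≠ 0 := by simpa using hab
              have ha1 : (1 : ℝ) ≤ (a : ℝ) := by exact_mod_cast Nat.one_le_iff_ne_zero.mpr ha
              simp only [Nat.cast_zero, zero_mul, zero_sub] at hge
              nlinarith
            have hbpos : (0 : ℝ) < (b : ℝ) := by
              exact_mod_cast Nat.pos_of_ne_zero hb
            rw [hx, show ((a : ℕ) : ℝ≥0∞) = ENNReal.ofReal (a : ℝ) by
                rw [ENNReal.ofReal_natCast],
              show ((b : ℕ) : ℝ≥0∞) = ENNReal.ofReal (b : ℝ) by rw [ENNReal.ofReal_natCast],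
              ← ENNReal.ofReal_div_of_pos hbpos]
            apply ENNReal.ofReal_le_ofReal
            rw [div_le_div_iff₀ hbpos hNg]
            nlinarith

/-- Let `𝒮` be a sharp fs monoid, realized as a submonoid `S` of its group
completion `L`. The map `V(𝒮) → R(𝒮)`, `V ↦ r_V`, is surjective: every
`r ∈ R(𝒮)` arises as `r_V` for some valuative submonoid `V` of `L` with
`V ⊇ S` and `V^× ∩ S = {1}`. -/
theorem statement7 {L : Type*} [CommGroup L] (S : Submonoid L)
    (hgen : ∀ x : L, ∃ p ∈ S, ∃ q ∈ S, x = p * q⁻¹)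
    (hfg : S.FG)
    (hsat : ∀ x : L, (∃ n : ℕ, 1 ≤ n ∧ x ^ n ∈ S) → x ∈ S)
    (hsharp : ∀ x : L, x ∈ S → x⁻¹ ∈ S → x = 1)
    (r : L → L → ℝ≥0∞)
    (hr1 : ∀ f g : L, f ∈ S → g ∈ S → (f, g) ≠ (1, 1) →
      r g f = (r f g)⁻¹)
    (hr2 : ∀ f g h : L, f ∈ S → g ∈ S → h ∈ S →
      (f, g) ≠ (1, 1) → (g, h) ≠ (1, 1) → (f, h) ≠ (1, 1) →
      ¬((r f g = 0 ∧ r g h = ⊤) ∨ (r f g = ⊤ ∧ r g h = 0)) →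
      r f g * r g h = r f h)
    (hr3 : ∀ f g h : L, f ∈ S → g ∈ S → h ∈ S →
      (f, h) ≠ (1, 1) → (g, h) ≠ (1, 1) → (f * g, h) ≠ (1, 1) →
      r (f * g) h = r f h + r g h) :
    ∃ V : Submonoid L, (∀ x : L, x ∈ V ∨ x⁻¹ ∈ V) ∧ S ≤ V ∧
      (∀ x : L, x ∈ S → x ∈ V → x⁻¹ ∈ V → x = 1) ∧
      ∀ f g : L, f ∈ S → g ∈ S → (f, g) ≠ (1, 1) → r f g = rV V f g := by
  obtain ⟨G, hG⟩ := hfg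
  have hGS : (G : Set L) ⊆ (S : Set L) := by
    rw [← hG]
    exact Submonoid.subset_closure
  obtain ⟨V, tot, le, sh, req⟩ :=
    statement7_aux S hsharp r hr1 hr2 hr3 G.card G le_rfl hGS
  rw [hG] at le sh req
  exact ⟨V, tot, le, sh, req⟩
end

section
/- Let 𝒮 be a sharp fs monoid. Endow V(𝒮) with the topology having as basic open sets U(I) = {V ∈ V(𝒮) : I ⊆ V} for finite subsets I of 𝒮^gp, and endow R(𝒮) with the topology of pointwise convergence (as a subspace of [0,∞]^{(𝒮×𝒮)\{(1,1)}}). Then the map V(𝒮) → R(𝒮), V ↦ r_V, is continuous. -/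
open scoped ENNReal

/-- Between any two elements of `ℝ≥0∞` there is a ratio of naturals. -/
lemma exists_nat_div_btwn {r c : ℝ≥0∞} (h : r < c) :
    ∃ a b : ℕ, 1 ≤ b ∧ r < (a : ℝ≥0∞) / b ∧ (a : ℝ≥0∞) / b < c := by
  rcases eq_or_ne c ⊤ with rfl | hc
  · obtain ⟨n, hn⟩ := ENNReal.exists_nat_gt h.ne_top
    exact ⟨n, 1, le_rfl, by simpa using hn, by simp⟩
  · obtain ⟨q, hq0, h1, h2⟩ := ENNReal.lt_iff_exists_rat_btwn.mp h
    have hnum : ((q.num.toNat : ℝ)) = (q.num : ℝ) := by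
      exact_mod_cast Int.toNat_of_nonneg (Rat.num_nonneg.mpr hq0)
    have hden : (0 : ℝ) < (q.den : ℝ) := by exact_mod_cast q.pos
    have key : ((q.num.toNat : ℝ≥0∞)) / (q.den : ℝ≥0∞) = ((Real.toNNReal q : ℝ≥0∞)) := by
      rw [← ENNReal.ofReal_natCast q.num.toNat, ← ENNReal.ofReal_natCast q.den,
        ← ENNReal.ofReal_div_of_pos hden]
      rw [hnum, show ((q.num : ℝ) / (q.den : ℝ)) = (q : ℝ) by rw [Rat.cast_def]]
      rfl
    exact ⟨q.num.toNat, q.den, q.pos, by rw [key]; exact h1, by rw [key]; exact h2⟩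

/-- Key sharpness lemma: a power of a nontrivial element of `S` cannot have its
inverse in `V`. -/
lemma pow_inv_not_mem {L : Type*} [CommGroup L] {S V : Submonoid L}
    (hSV : S ≤ V) (hVsharp : ∀ x : L, x ∈ S → x ∈ V → x⁻¹ ∈ V → x = 1)
    (hsharp : ∀ x : L, x ∈ S → x⁻¹ ∈ S → x = 1)
    {g : L} (hg : g ∈ S) (hg1 : g ≠ 1) {k : ℕ} (hk : 1 ≤ k) :
    (g ^ k)⁻¹ ∉ V := by
  intro hkV
  have h2 : g ^ k = 1 := hVsharp _ (pow_mem hg k) (hSV (pow_mem hg k)) hkV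
  apply hg1
  apply hsharp g hg
  have h3 : g ^ (k - 1) * g = 1 := by
    rw [← pow_succ, Nat.sub_add_cancel hk]; exact h2
  have h4 : g ^ (k - 1) = g⁻¹ := eq_inv_of_mul_eq_one_left h3
  exact h4 ▸ pow_mem hg (k - 1)

/-- If `g^a f^{-b} ∈ V` with `b ≥ 1` and `g ≠ 1`, then `r_V(f,g) ≤ a/b`. -/
lemma rV_le_of_mem {L : Type*} [CommGroup L] {S V : Submonoid L}
    (hSV : S ≤ V) (hVsharp : ∀ x : L, x ∈ S → x ∈ V → x⁻¹ ∈ V → x = 1)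
    (hsharp : ∀ x : L, x ∈ S → x⁻¹ ∈ S → x = 1)
    {f g : L} (hg : g ∈ S) (hg1 : g ≠ 1)
    {a b : ℕ} (hb : 1 ≤ b) (hmem : g ^ a * (f ^ b)⁻¹ ∈ V) :
    rV V f g ≤ (a : ℝ≥0∞) / b := by
  apply sSup_le
  rintro x ⟨a', b', hne, hmem', rfl⟩
  rcases Nat.eq_zero_or_pos b' with rfl | hb'
  · -- b' = 0 : then a' ≥ 1 and g^{-a'} ∈ V, contradiction
    have ha' : 1 ≤ a' := by
      rcases Nat.eq_zero_or_pos a' with rfl | h; · simp at hne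
      · exact h
    exfalso
    apply pow_inv_not_mem hSV hVsharp hsharp hg hg1 ha'
    simpa using hmem'
  · -- b' ≥ 1 : show a'/b' ≤ a/b, i.e. a' * b ≤ a * b'
    have hnat : a' * b ≤ a * b' := by
      by_contra hcon
      push_neg at hcon
      set k := a' * b - a * b' with hkdef
      have hk1 : 1 ≤ k := by omega
      have hkeq : a' * b = a * b' + k := by omega
      have e1 : (g ^ a * (f ^ b)⁻¹) ^ b' = g ^ (a * b') * (f ^ (b * b'))⁻¹ := by
        rw [mul_pow, inv_pow, ← pow_mul, ← pow_mul]
      have e2 : (f ^ b' * (g ^ a')⁻¹) ^ b = f ^ (b' * b) * (g ^ (a' * b))⁻¹ := by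
        rw [mul_pow, inv_pow, ← pow_mul, ← pow_mul]
      have e3 : g ^ (a * b') * (f ^ (b * b'))⁻¹ * (f ^ (b' * b) * (g ^ (a' * b))⁻¹)
          = (g ^ k)⁻¹ := by
        rw [Nat.mul_comm b' b, hkeq, pow_add, mul_inv]
        group
      have hV : (g ^ k)⁻¹ ∈ V := by
        rw [← e3, ← e1, ← e2]
        exact mul_mem (pow_mem hmem b') (pow_mem hmem' b)
      exact pow_inv_not_mem hSV hVsharp hsharp hg hg1 hk1 hV
    have hb0 : (b : ℝ≥0∞) ≠ 0 := Nat.cast_ne_zero.mpr (by omega)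
    have hb'0 : (b' : ℝ≥0∞) ≠ 0 := Nat.cast_ne_zero.mpr (by omega)
    rw [ENNReal.div_le_iff_le_mul (Or.inl hb'0) (Or.inl (ENNReal.natCast_ne_top b')),
      show ((a : ℝ≥0∞) / b) * b' = ((a : ℝ≥0∞) * b') / b by
        rw [div_eq_mul_inv, div_eq_mul_inv, mul_right_comm],
      ENNReal.le_div_iff_mul_le (Or.inl hb0) (Or.inl (ENNReal.natCast_ne_top b))]
    exact_mod_cast hnat

/-- Let `𝒮` be a sharp fs monoid, realized as a submonoid `S` of its group
completion `L`. Endow `V(𝒮)` with the topology generated by the basic open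
sets `U(I) = {V : I ⊆ V}` for finite `I ⊆ L`, and `R(𝒮)` with the topology
of pointwise convergence (as a subspace of `[0,∞]^{(𝒮×𝒮)\{(1,1)}}`). Then
the map `V(𝒮) → R(𝒮)`, `V ↦ r_V`, is continuous. -/
theorem statement8 {L : Type*} [CommGroup L] (S : Submonoid L)
    (hgen : ∀ x : L, ∃ p ∈ S, ∃ q ∈ S, x = p * q⁻¹)
    (hfg : S.FG)
    (hsat : ∀ x : L, (∃ n : ℕ, 1 ≤ n ∧ x ^ n ∈ S) → x ∈ S)
    (hsharp : ∀ x : L, x ∈ S → x⁻¹ ∈ S → x = 1) :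
    @Continuous
      {V : Submonoid L // (∀ x : L, x ∈ V ∨ x⁻¹ ∈ V) ∧ S ≤ V ∧
        (∀ x : L, x ∈ S → x ∈ V → x⁻¹ ∈ V → x = 1)}
      ({p : L × L // p.1 ∈ S ∧ p.2 ∈ S ∧ p ≠ 1} → ℝ≥0∞)
      (TopologicalSpace.generateFrom
        {U | ∃ I : Finset L, U = {V | ∀ x ∈ I, x ∈ V.1}})
      inferInstance
      (fun V p => rV V.1 p.1.1 p.1.2) := by
  letI τ : TopologicalSpace
      {V : Submonoid L // (∀ x : L, x ∈ V ∨ x⁻¹ ∈ V) ∧ S ≤ V ∧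
        (∀ x : L, x ∈ S → x ∈ V → x⁻¹ ∈ V → x = 1)} :=
    TopologicalSpace.generateFrom
      {U | ∃ I : Finset L, U = {V | ∀ x ∈ I, x ∈ V.1}}
  rw [continuous_pi_iff]
  intro p
  obtain ⟨⟨f, g⟩, hf, hg, hp1⟩ := p
  simp only
  rw [OrderTopology.topology_eq_generate_intervals (α := ℝ≥0∞),
    continuous_generateFrom_iff]
  rintro s ⟨c, rfl | rfl⟩
  · -- preimage of Ioi c
    have heq : (fun V : {V : Submonoid L // (∀ x : L, x ∈ V ∨ x⁻¹ ∈ V) ∧ S ≤ V ∧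
          (∀ x : L, x ∈ S → x ∈ V → x⁻¹ ∈ V → x = 1)} => rV V.1 f g) ⁻¹' Set.Ioi c =
        ⋃ (ab : ℕ × ℕ) (_ : ab ≠ (0, 0) ∧ c < (ab.1 : ℝ≥0∞) / ab.2),
          {V | ∀ x ∈ ({f ^ ab.2 * (g ^ ab.1)⁻¹} : Finset L), x ∈ V.1} := by
      ext V
      simp only [Set.mem_preimage, Set.mem_Ioi, Set.mem_iUnion, Finset.mem_singleton,
        Set.mem_setOf_eq, rV, lt_sSup_iff]
      constructor
      · rintro ⟨x, ⟨a, b, hne, hmem, rfl⟩, hlt⟩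
        exact ⟨(a, b), ⟨hne, hlt⟩, fun x hx => hx ▸ hmem⟩
      · rintro ⟨⟨a, b⟩, ⟨hne, hlt⟩, hmem⟩
        exact ⟨(a : ℝ≥0∞) / b, ⟨a, b, hne, hmem _ rfl, rfl⟩, hlt⟩
    rw [heq]
    exact isOpen_iUnion fun ab => isOpen_iUnion fun _ =>
      TopologicalSpace.isOpen_generateFrom_of_mem ⟨{f ^ ab.2 * (g ^ ab.1)⁻¹}, rfl⟩
  · -- preimage of Iio c
    by_cases hg1 : g = 1
    · -- g = 1 : rV is identically ⊤, so preimage is empty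
      subst hg1
      have htop : ∀ V : {V : Submonoid L // (∀ x : L, x ∈ V ∨ x⁻¹ ∈ V) ∧ S ≤ V ∧
          (∀ x : L, x ∈ S → x ∈ V → x⁻¹ ∈ V → x = 1)}, rV V.1 f 1 = ⊤ := by
        intro V
        apply top_unique
        apply le_sSup
        refine ⟨1, 0, by simp, by simpa using V.1.one_mem, ?_⟩
        rw [Nat.cast_zero, Nat.cast_one, ENNReal.div_zero one_ne_zero]
      have heq : (fun V : {V : Submonoid L // (∀ x : L, x ∈ V ∨ x⁻¹ ∈ V) ∧ S ≤ V ∧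
          (∀ x : L, x ∈ S → x ∈ V → x⁻¹ ∈ V → x = 1)} => rV V.1 f 1) ⁻¹' Set.Iio c = ∅ := by
        ext V
        simp [htop V]
      rw [heq]
      exact isOpen_empty
    · -- g ≠ 1
      have heq : (fun V : {V : Submonoid L // (∀ x : L, x ∈ V ∨ x⁻¹ ∈ V) ∧ S ≤ V ∧
            (∀ x : L, x ∈ S → x ∈ V → x⁻¹ ∈ V → x = 1)} => rV V.1 f g) ⁻¹' Set.Iio c =
          ⋃ (ab : ℕ × ℕ) (_ : 1 ≤ ab.2 ∧ (ab.1 : ℝ≥0∞) / ab.2 < c),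
            {V | ∀ x ∈ ({g ^ ab.1 * (f ^ ab.2)⁻¹} : Finset L), x ∈ V.1} := by
        ext V
        simp only [Set.mem_preimage, Set.mem_Iio, Set.mem_iUnion, Finset.mem_singleton,
          Set.mem_setOf_eq]
        constructor
        · intro h
          obtain ⟨a, b, hb, h1, h2⟩ := exists_nat_div_btwn h
          refine ⟨(a, b), ⟨hb, h2⟩, fun x hx => ?_⟩
          subst hx
          rcases V.2.1 (f ^ b * (g ^ a)⁻¹) with hx | hx
          · exfalso
            have hle : (a : ℝ≥0∞) / b ≤ rV V.1 f g :=
              le_sSup ⟨a, b, by intro h; rw [Prod.mk.injEq] at h; omega, hx, rfl⟩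
            exact absurd (hle.trans_lt h1) (lt_irrefl _)
          · rw [mul_inv_rev, inv_inv] at hx
            simpa [mul_comm] using hx
        · rintro ⟨⟨a, b⟩, ⟨hb, hlt⟩, hmem⟩
          calc rV V.1 f g ≤ (a : ℝ≥0∞) / b :=
                rV_le_of_mem V.2.2.1 V.2.2.2 hsharp hg hg1 hb (hmem _ rfl)
            _ < c := hlt
      rw [heq]
      exact isOpen_iUnion fun ab => isOpen_iUnion fun _ =>
        TopologicalSpace.isOpen_generateFrom_of_mem ⟨{g ^ ab.1 * (f ^ ab.2)⁻¹}, rfl⟩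
end

section
/- Let L be a finitely generated free abelian group, N = Hom(L, ℤ), and let R be a finite subset of L with R⁻¹ = R which generates the ℚ-vector space ℚ ⊗ L. Let I be the set of all cones of the form σ = {h ∈ N_ℝ : h(l) ≥ 0 for all l ∈ R'}, where R' ranges over subsets of R with R = R' ∪ (R')⁻¹. Then: (a) for σ₁, σ₂ ∈ I, the intersection σ₁ ∩ σ₂ is a face of σ₁; (b) every face of a cone in I belongs to I; (c) the union of the cones in I is all of N_ℝ. In particular, I is a finite rational fan in N_ℝ with support N_ℝ. -/
open Pointwise

/-- The rational polyhedral cone in `N_ℝ = Hom(L,ℝ)` cut out by a set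
`R' ⊆ L` of inequalities `h(l) ≥ 0`. -/
def coneOf {L : Type*} [AddCommGroup L] (R' : Set L) : Set (L →+ ℝ) :=
  {h | ∀ l ∈ R', 0 ≤ h l}

/-- `τ` is a face of the cone `σ`: a subset of the form `σ ∩ ker(l)` for some
`l ∈ L` with `l ≥ 0` on `σ` (the case `l = 0` giving `σ` itself). -/
def IsFaceOf {L : Type*} [AddCommGroup L] (σ τ : Set (L →+ ℝ)) : Prop :=
  ∃ l : L, (∀ h ∈ σ, 0 ≤ h l) ∧ τ = {h ∈ σ | h l = 0}

/-- The collection `I` of cones `σ = {h : h(l) ≥ 0 ∀ l ∈ R'}` for subsets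
`R'` of `R` with `R = R' ∪ (-R')`. -/
def fanI {L : Type*} [AddCommGroup L] (R : Finset L) : Set (Set (L →+ ℝ)) :=
  {σ | ∃ R' : Set L, R' ⊆ ↑R ∧ (↑R : Set L) = R' ∪ (-R') ∧ σ = coneOf R'}

/-- Let `L` be a finitely generated free abelian group and `R ⊆ L` a finite
subset with `-R = R` generating `ℚ ⊗ L` over `ℚ`. Then the collection `I`
of cones cut out by subsets `R' ⊆ R` with `R = R' ∪ (-R')` satisfies:
(a) for `σ₁, σ₂ ∈ I`, `σ₁ ∩ σ₂` is a face of `σ₁`; (b) every face of a cone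
in `I` belongs to `I`; (c) the union of the cones in `I` is all of `N_ℝ`;
and `I` is finite. In particular, `I` is a finite rational fan with support
`N_ℝ`. -/
theorem statement13 {L : Type*} [AddCommGroup L]
    [Module.Free ℤ L] [Module.Finite ℤ L]
    (R : Finset L) (hsym : ∀ x : L, x ∈ R ↔ -x ∈ R)
    (hspan : ∀ x : L, ∃ n : ℕ, 0 < n ∧ (n : ℤ) • x ∈ Submodule.span ℤ (↑R : Set L)) :
    (∀ σ₁ ∈ fanI R, ∀ σ₂ ∈ fanI R, IsFaceOf σ₁ (σ₁ ∩ σ₂)) ∧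
    (∀ σ ∈ fanI R, ∀ τ : Set (L →+ ℝ), IsFaceOf σ τ → τ ∈ fanI R) ∧
    ⋃₀ fanI R = Set.univ ∧
    (fanI R).Finite := by
  classical
  refine ⟨?_, ?_, ?_, ?_⟩
  · -- (a)
    rintro σ₁ ⟨R₁, hR₁sub, hR₁, rfl⟩ σ₂ ⟨R₂, hR₂sub, hR₂, rfl⟩
    set S : Finset L := R.filter (fun x => x ∈ R₂ ∧ x ∉ R₁) with hS
    have hnegS : ∀ x ∈ S, -x ∈ R₁ := by
      intro x hx
      rw [hS, Finset.mem_filter] at hx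
      have hxR : (x : L) ∈ (↑R : Set L) := hx.1
      rw [hR₁] at hxR
      rcases hxR with h1 | h2
      · exact absurd h1 hx.2.2
      · exact Set.mem_neg.mp h2
    refine ⟨∑ x ∈ S, (-x), ?_, ?_⟩
    · intro h hh
      rw [map_sum]
      exact Finset.sum_nonneg fun x hx => hh (-x) (hnegS x hx)
    · ext h
      simp only [Set.mem_inter_iff, Set.mem_setOf_eq]
      constructor
      · rintro ⟨h1, h2⟩
        refine ⟨h1, ?_⟩
        rw [map_sum]
        refine Finset.sum_eq_zero fun x hx => ?_
        rw [hS, Finset.mem_filter] at hx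
        have hx2 : 0 ≤ h x := h2 x hx.2.1
        have hx1 : 0 ≤ h (-x) := h1 (-x) (hnegS x (by rw [hS, Finset.mem_filter]; exact hx))
        rw [map_neg] at hx1 ⊢
        linarith
      · rintro ⟨h1, h2⟩
        refine ⟨h1, ?_⟩
        rw [map_sum] at h2
        have hz : ∀ x ∈ S, h (-x) = 0 :=
          (Finset.sum_eq_zero_iff_of_nonneg
            (fun x hx => h1 (-x) (hnegS x hx))).mp h2
        intro y hy
        by_cases hyR1 : y ∈ R₁
        · exact h1 y hyR1
        · have hyS : y ∈ S := by
            rw [hS, Finset.mem_filter]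
            exact ⟨Finset.mem_coe.mp (hR₂sub hy), hy, hyR1⟩
          have := hz y hyS
          rw [map_neg] at this
          linarith
  · -- (b)
    rintro σ ⟨R', hsub, hcov, rfl⟩ τ ⟨l, hl, rfl⟩
    set τ' : Set (L →+ ℝ) := {h ∈ coneOf R' | h l = 0} with hτ'
    set Z : Set L := {x | x ∈ R' ∧ ∀ h ∈ τ', h x = 0} with hZ
    have hZsub : Z ⊆ R' := fun x hx => hx.1
    refine ⟨R' ∪ (-Z), ?_, ?_, ?_⟩
    · rintro x (hx | hx)
      · exact hsub hx
      · have : -x ∈ R' := hZsub (Set.mem_neg.mp hx)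
        have hxR : -x ∈ R := Finset.mem_coe.mp (hsub this)
        have := (hsym (-x)).mp hxR
        rwa [neg_neg, ← Finset.mem_coe] at this
    · have hsub' : (R' ∪ (-Z) : Set L) ⊆ (↑R : Set L) := by
        rintro x (hx | hx)
        · exact hsub hx
        · have : -x ∈ R' := hZsub (Set.mem_neg.mp hx)
          have hxR : -x ∈ R := Finset.mem_coe.mp (hsub this)
          have := (hsym (-x)).mp hxR
          rwa [neg_neg, ← Finset.mem_coe] at this
      apply Set.Subset.antisymm
      · intro x hx
        rw [hcov] at hx
        rcases hx with hx | hx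
        · exact Or.inl (Or.inl hx)
        · exact Or.inr (Set.mem_neg.mpr (Or.inl (Set.mem_neg.mp hx)))
      · rintro x (hx | hx)
        · exact hsub' hx
        · have : -x ∈ R' ∪ (-Z) := Set.mem_neg.mp hx
          have hxR : -x ∈ (↑R : Set L) := hsub' this
          have := (hsym (-x)).mp (Finset.mem_coe.mp hxR)
          rwa [neg_neg, ← Finset.mem_coe] at this
    · apply Set.Subset.antisymm
      · intro h hh
        intro x hx
        rcases hx with hx | hx
        · exact hh.1 x hx
        · have hxZ : -x ∈ Z := Set.mem_neg.mp hx
          have : h (-x) = 0 := hxZ.2 h hh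
          rw [map_neg] at this
          linarith
      · intro h hh
        have hσ : h ∈ coneOf R' := fun x hx => hh x (Or.inl hx)
        refine ⟨hσ, ?_⟩
        -- h vanishes on Z
        have hkey : ∀ x ∈ Z, h x = 0 := by
          intro x hx
          have h1 : 0 ≤ h x := hh x (Or.inl (hZsub hx))
          have h2 : 0 ≤ h (-x) := hh (-x) (Or.inr (Set.mem_neg.mpr (by rwa [neg_neg])))
          rw [map_neg] at h2
          linarith
        by_contra hne
        have hpos : 0 < h l := lt_of_le_of_ne (hl h hσ) (Ne.symm hne)
        set T : Finset L := R.filter (fun x => x ∈ R' ∧ x ∉ Z) with hT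
        have hTex : ∀ x ∈ T, ∃ h' ∈ τ', h' x ≠ 0 := by
          intro x hx
          rw [hT, Finset.mem_filter] at hx
          by_contra hcon
          push_neg at hcon
          exact hx.2.2 ⟨hx.2.1, hcon⟩
        choose f hf1 hf2 using hTex
        set h₀ : L →+ ℝ := ∑ x ∈ T.attach, f x x.2 with hh₀
        have h₀apply : ∀ y : L, h₀ y = ∑ x ∈ T.attach, f x x.2 y := by
          intro y
          rw [hh₀]
          exact AddMonoidHom.finset_sum_apply _ _ _
        have hfσ : ∀ (x : L) (hx : x ∈ T), f x hx ∈ coneOf R' := fun x hx => (hf1 x hx).1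
        have h₀σ : h₀ ∈ coneOf R' := by
          intro y hy
          rw [h₀apply]
          exact Finset.sum_nonneg fun x _ => hfσ x x.2 y hy
        have h₀l : h₀ l = 0 := by
          rw [h₀apply]
          exact Finset.sum_eq_zero fun x _ => (hf1 x x.2).2
        have h₀τ : h₀ ∈ τ' := ⟨h₀σ, h₀l⟩
        have h₀pos : ∀ x ∈ T, 0 < h₀ x := by
          intro x hx
          rw [h₀apply]
          refine Finset.sum_pos' (fun y _ => hfσ y y.2 x ?_) ⟨⟨x, hx⟩, Finset.mem_attach _ _, ?_⟩
          · rw [hT, Finset.mem_filter] at hx; exact hx.2.1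
          · refine lt_of_le_of_ne (hfσ x hx x ?_) (Ne.symm (hf2 x hx))
            rw [hT, Finset.mem_filter] at hx; exact hx.2.1
        obtain ⟨c, hc⟩ : ∃ c : ℝ, ∀ x ∈ T, h x / h₀ x ≤ c := by
          obtain ⟨c, hc⟩ := (T.finite_toSet.image (fun x => h x / h₀ x)).bddAbove
          exact ⟨c, fun x hx => hc (Set.mem_image_of_mem _ (Finset.mem_coe.mpr hx))⟩
        have hc' : ∀ x ∈ T, h x ≤ c * h₀ x := by
          intro x hx
          have := (div_le_iff₀ (h₀pos x hx)).mp (hc x hx)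
          linarith
        set g : L →+ ℝ :=
          { toFun := fun y => c * h₀ y - h y
            map_zero' := by simp
            map_add' := by intro a b; simp only [map_add]; ring } with hg
        have hgσ : g ∈ coneOf R' := by
          intro y hy
          show 0 ≤ c * h₀ y - h y
          by_cases hyZ : y ∈ Z
          · rw [hkey y hyZ, hyZ.2 h₀ h₀τ]
            simp
          · have hyT : y ∈ T := by
              rw [hT, Finset.mem_filter]
              exact ⟨Finset.mem_coe.mp (hsub hy), hy, hyZ⟩
            have := hc' y hyT
            linarith
        have : 0 ≤ g l := hl g hgσ
        have hgl : g l = c * h₀ l - h l := rfl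
        rw [hgl, h₀l] at this
        linarith
  · -- (c)
    apply Set.eq_univ_of_forall
    intro h
    set R' : Set L := {x | x ∈ (↑R : Set L) ∧ 0 ≤ h x} with hR'
    refine ⟨coneOf R', ⟨R', fun x hx => hx.1, ?_, rfl⟩, fun x hx => hx.2⟩
    apply Set.Subset.antisymm
    · intro x hx
      by_cases hhx : 0 ≤ h x
      · exact Or.inl ⟨hx, hhx⟩
      · refine Or.inr (Set.mem_neg.mpr ⟨?_, ?_⟩)
        · exact Finset.mem_coe.mpr ((hsym x).mp (Finset.mem_coe.mp hx))
        · rw [map_neg]; linarith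
    · rintro x (hx | hx)
      · exact hx.1
      · have : -x ∈ R' := Set.mem_neg.mp hx
        have hxR := (hsym (-x)).mp (Finset.mem_coe.mp this.1)
        rwa [neg_neg, ← Finset.mem_coe] at hxR
  · -- (d)
    apply Set.Finite.subset ((R.finite_toSet.finite_subsets).image coneOf)
    rintro σ ⟨R', h1, _, rfl⟩
    exact ⟨R', h1, rfl⟩
end

section
/- In the setting of the fan I constructed from a finite symmetric generating subset R of L: suppose in addition R⁺ ⊆ R is a subset generating ℚ ⊗ L over ℚ, and let ν = {h ∈ N_ℝ : h(l) ≥ 0 for all l ∈ R⁺}. Then the cones σ ∈ I with σ ⊆ ν form a rational finite subdivision of ν; that is, they form a fan whose support equals ν. Moreover, for σ ∈ I one has σ ∩ ν ∈ I. -/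
/-! A cone of `I` is `coneOf R'` with `R = R' ∪ -R'`, and enlarging `R'` inside `R` stays in
`I`: so `σ ∩ ν = coneOf (R' ∪ R⁺) ∈ I`, and `h ∈ ν` lies in `coneOf (R⁺ ∪ {l ∈ R | h l ≥ 0})`.
The intersection of cones `coneOf R₁, coneOf R₂` of `I` is the face of the first cut out by the sum
of the `m ∈ R₁` with `-m ∈ R₂`. Conversely a face `τ = σ ∩ ker l` of `σ = coneOf R'` equals
`coneOf (R' ∪ -Z)`, `Z` the `m ∈ R'` vanishing on `τ`: summing witnesses gives `h₀ ∈ τ` positive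
on `R' \ Z`, so every `h` on the right satisfies `h ≤ c • h₀` on `R'`; then `c • h₀ - h ∈ σ`, and
`0 ≤ (c • h₀ - h) l = -h l` forces `h l = 0`. -/

open Pointwise

section Cones

variable {L : Type*} [AddCommGroup L]

lemma coneOf_anti {A B : Set L} (hAB : A ⊆ B) : coneOf B ⊆ coneOf A :=
  fun _ hh l hl => hh l (hAB hl)

lemma coneOf_union (A B : Set L) : coneOf (A ∪ B) = coneOf A ∩ coneOf B := by
  ext h
  simp only [coneOf, Set.mem_union, or_imp, forall_and, Set.mem_inter_iff, Set.mem_ofPred_eq]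

lemma coneOf_mem_fanI {R : Finset L} (hsym : ∀ x : L, x ∈ R ↔ -x ∈ R) {R' S : Set L}
    (hR : (R : Set L) = R' ∪ -R') (hR'S : R' ⊆ S) (hSR : S ⊆ R) : coneOf S ∈ fanI R := by
  have hnegSR : -S ⊆ R := fun x hx => (hsym x).mpr (hSR hx)
  refine ⟨S, hSR, subset_antisymm ?_ (Set.union_subset hSR hnegSR), rfl⟩
  exact hR ▸ Set.union_subset_union hR'S (Set.neg_subset_neg.mpr hR'S)

lemma coe_eq_nonneg_union_neg {R : Finset L} (hsym : ∀ x : L, x ∈ R ↔ -x ∈ R) (h : L →+ ℝ) :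
    (R : Set L) = {l ∈ (R : Set L) | 0 ≤ h l} ∪ -{l ∈ (R : Set L) | 0 ≤ h l} := by
  refine subset_antisymm (fun x hx => ?_) (Set.union_subset (fun _ hx => hx.1) ?_)
  · by_cases hx0 : 0 ≤ h x
    · exact Or.inl ⟨hx, hx0⟩
    · refine Or.inr ⟨(hsym x).mp hx, ?_⟩
      rw [map_neg]
      linarith
  · exact fun x hx => (hsym x).mpr hx.1

lemma isFaceOf_sep_forall_eq_zero (σ : Set (L →+ ℝ)) {T : Set L} (hT : T.Finite)
    (hnonneg : ∀ m ∈ T, ∀ h ∈ σ, 0 ≤ h m) : IsFaceOf σ {h ∈ σ | ∀ m ∈ T, h m = 0} := by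
  refine ⟨∑ m ∈ hT.toFinset, m, fun h hh => ?_, ?_⟩
  · rw [map_sum]
    exact Finset.sum_nonneg fun m hm => hnonneg m (hT.mem_toFinset.mp hm) h hh
  · ext h
    refine and_congr_right fun hh => ?_
    rw [map_sum, Finset.sum_eq_zero_iff_of_nonneg
      fun m hm => hnonneg m (hT.mem_toFinset.mp hm) h hh]
    simp only [Set.Finite.mem_toFinset]

lemma coneOf_inter_coneOf {R₁ R₂ : Set L} (hR₂ : R₂ ⊆ R₁ ∪ -R₁) :
    coneOf R₁ ∩ coneOf R₂ = {h ∈ coneOf R₁ | ∀ m ∈ R₁ ∩ -R₂, h m = 0} := by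
  ext h
  refine and_congr_right fun h₁ => ⟨fun h₂ m hm => ?_, fun hzero m hm => ?_⟩
  · have := h₂ (-m) hm.2
    rw [map_neg] at this
    linarith [h₁ m hm.1]
  · rcases hR₂ hm with hm₁ | hm₁
    · exact h₁ m hm₁
    · have := hzero (-m) ⟨hm₁, by rwa [Set.mem_neg, neg_neg]⟩
      rw [map_neg] at this
      linarith

lemma isFaceOf_coneOf_inter {R₁ R₂ : Set L} (hR₁ : R₁.Finite) (hR₂ : R₂ ⊆ R₁ ∪ -R₁) :
    IsFaceOf (coneOf R₁) (coneOf R₁ ∩ coneOf R₂) := by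
  rw [coneOf_inter_coneOf hR₂]
  exact isFaceOf_sep_forall_eq_zero _ (hR₁.subset Set.inter_subset_left)
    fun m hm h hh => hh m hm.1

lemma exists_mem_eq_zero_imp_forall_eq_zero {τ : Set (L →+ ℝ)} (hzero : 0 ∈ τ)
    (hadd : ∀ a ∈ τ, ∀ b ∈ τ, a + b ∈ τ) {S : Set L} (hS : S.Finite)
    (hnonneg : ∀ h ∈ τ, ∀ m ∈ S, 0 ≤ h m) :
    ∃ h₀ ∈ τ, ∀ m ∈ S, h₀ m = 0 → ∀ h ∈ τ, h m = 0 := by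
  have hwitness : ∀ m : L, ∃ g ∈ τ, g m = 0 → ∀ h ∈ τ, h m = 0 := by
    intro m
    by_cases hm : ∀ h ∈ τ, h m = 0
    · exact ⟨0, hzero, fun _ => hm⟩
    · push Not at hm
      obtain ⟨g, hg, hgm⟩ := hm
      exact ⟨g, hg, fun h => absurd h hgm⟩
  choose g hgτ hg using hwitness
  have hsum_mem : ∑ m ∈ hS.toFinset, g m ∈ τ :=
    Finset.sum_induction _ (· ∈ τ) (fun a b ha hb => hadd a ha b hb) hzero fun m _ => hgτ m
  refine ⟨_, hsum_mem, fun m hm hsum => hg m ?_⟩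
  rw [AddMonoidHom.finsetSum_apply, Finset.sum_eq_zero_iff_of_nonneg
    fun m' _ => hnonneg (g m') (hgτ m') m hm] at hsum
  exact hsum m (hS.mem_toFinset.mpr hm)

lemma Set.Finite.exists_le_mul {ι : Type*} {S : Set ι} (hS : S.Finite) {f g : ι → ℝ}
    (hf : ∀ i ∈ S, 0 ≤ f i) (hg : ∀ i ∈ S, f i = 0 → g i ≤ 0) :
    ∃ c : ℝ, ∀ i ∈ S, g i ≤ c * f i := by
  obtain ⟨c, hc⟩ := (hS.image fun i => g i / f i).bddAbove
  refine ⟨c, fun i hi => ?_⟩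
  rcases (hf i hi).eq_or_lt with hfi | hfi
  · rw [← hfi, mul_zero]
    exact hg i hi hfi.symm
  · rw [← div_le_iff₀ hfi]
    exact hc ⟨i, hi, rfl⟩

lemma IsFaceOf.eq_coneOf {R' : Set L} (hR' : R'.Finite) {τ : Set (L →+ ℝ)}
    (hτ : IsFaceOf (coneOf R') τ) : τ = coneOf (R' ∪ -{m ∈ R' | ∀ h ∈ τ, h m = 0}) := by
  obtain ⟨l, hl, rfl⟩ := hτ
  obtain ⟨h₀, ⟨h₀_mem, h₀_l⟩, h₀_zeros⟩ := exists_mem_eq_zero_imp_forall_eq_zero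
    (τ := {h ∈ coneOf R' | h l = 0}) ⟨fun _ _ => le_rfl, rfl⟩
    (fun a ha b hb => ⟨fun m hm => add_nonneg (ha.1 m hm) (hb.1 m hm), by simp [ha.2, hb.2]⟩)
    hR' fun h hh => hh.1
  rw [coneOf_union]
  ext h
  refine and_congr_right fun hh => ⟨fun hhl m hm => ?_, fun hneg => ?_⟩
  · have := hm.2 h ⟨hh, hhl⟩
    rw [map_neg, neg_eq_zero] at this
    exact this.ge
  · have hvanish : ∀ m ∈ R', h₀ m = 0 → h m ≤ 0 := fun m hm hm₀ => by
      have := hneg (-m) (by rw [Set.mem_neg, neg_neg]; exact ⟨hm, h₀_zeros m hm hm₀⟩)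
      rw [map_neg] at this
      linarith
    obtain ⟨c, hc⟩ := hR'.exists_le_mul h₀_mem hvanish
    have hcl := hl (c • h₀ - h) fun m hm => by
      simpa only [AddMonoidHom.sub_apply, AddMonoidHom.smul_apply, smul_eq_mul, sub_nonneg]
        using hc m hm
    simp only [AddMonoidHom.sub_apply, AddMonoidHom.smul_apply, smul_eq_mul, h₀_l,
      mul_zero, zero_sub, neg_nonneg] at hcl
    exact le_antisymm hcl (hl h hh)

end Cones

theorem statement14_general {L : Type*} [AddCommGroup L]
    (R : Finset L) (hsym : ∀ x : L, x ∈ R ↔ -x ∈ R)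
    (Rp : Finset L) (hsub : Rp ⊆ R) :
    (∀ σ ∈ fanI R, σ ∩ coneOf (↑Rp : Set L) ∈ fanI R) ∧
    ⋃₀ {σ ∈ fanI R | σ ⊆ coneOf (↑Rp : Set L)} = coneOf (↑Rp : Set L) ∧
    (∀ σ₁ ∈ {σ ∈ fanI R | σ ⊆ coneOf (↑Rp : Set L)},
      ∀ σ₂ ∈ {σ ∈ fanI R | σ ⊆ coneOf (↑Rp : Set L)},
      IsFaceOf σ₁ (σ₁ ∩ σ₂)) ∧
    (∀ σ ∈ {σ ∈ fanI R | σ ⊆ coneOf (↑Rp : Set L)}, ∀ τ : Set (L →+ ℝ),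
      IsFaceOf σ τ → τ ∈ {σ ∈ fanI R | σ ⊆ coneOf (↑Rp : Set L)}) := by
  have hRpR : (Rp : Set L) ⊆ R := Finset.coe_subset.mpr hsub
  refine ⟨?inter, ?support, ?inter_face, ?face_mem⟩
  case inter =>
    rintro _ ⟨R', hR'R, hR, rfl⟩
    rw [← coneOf_union]
    exact coneOf_mem_fanI hsym hR Set.subset_union_left (Set.union_subset hR'R hRpR)
  case support =>
    refine subset_antisymm (Set.sUnion_subset fun σ hσ => hσ.2) fun h hh => ?_
    set H := {l ∈ (R : Set L) | 0 ≤ h l}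
    refine ⟨coneOf (Rp ∪ H), ⟨?_, coneOf_anti Set.subset_union_left⟩, ?_⟩
    · exact coneOf_mem_fanI hsym (coe_eq_nonneg_union_neg hsym h) Set.subset_union_right
        (Set.union_subset hRpR fun _ hl => hl.1)
    · rw [coneOf_union]
      exact ⟨hh, fun _ hl => hl.2⟩
  case inter_face =>
    rintro _ ⟨⟨R₁, hR₁R, hR₁, rfl⟩, -⟩ _ ⟨⟨R₂, hR₂R, -, rfl⟩, -⟩
    exact isFaceOf_coneOf_inter (R.finite_toSet.subset hR₁R) (hR₁ ▸ hR₂R)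
  case face_mem =>
    rintro _ ⟨⟨R', hR'R, hR, rfl⟩, hν⟩ τ hτ
    obtain ⟨l, -, rfl⟩ := id hτ
    refine ⟨?_, fun h hh => hν hh.1⟩
    rw [hτ.eq_coneOf (R.finite_toSet.subset hR'R)]
    exact coneOf_mem_fanI hsym hR Set.subset_union_left
      (Set.union_subset hR'R fun x hx => (hsym x).mpr (hR'R hx.1))

/-- In the setting of the fan `I` constructed from a finite symmetric
generating subset `R` of `L`: if `R⁺ ⊆ R` also generates `ℚ ⊗ L` over `ℚ`
and `ν = {h : h(l) ≥ 0 ∀ l ∈ R⁺}`, then the cones `σ ∈ I` with `σ ⊆ ν`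
form a rational finite subdivision of `ν`: they form a fan (pairwise
intersections are faces and the collection is closed under taking faces)
whose support equals `ν`. Moreover, `σ ∩ ν ∈ I` for every `σ ∈ I`. -/
theorem statement14 {L : Type*} [AddCommGroup L]
    [Module.Free ℤ L] [Module.Finite ℤ L]
    (R : Finset L) (hsym : ∀ x : L, x ∈ R ↔ -x ∈ R)
    (hspan : ∀ x : L, ∃ n : ℕ, 0 < n ∧ (n : ℤ) • x ∈ Submodule.span ℤ (↑R : Set L))
    (Rp : Finset L) (hsub : Rp ⊆ R)
    (hspanp : ∀ x : L, ∃ n : ℕ, 0 < n ∧ (n : ℤ) • x ∈ Submodule.span ℤ (↑Rp : Set L)) :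
    (∀ σ ∈ fanI R, σ ∩ coneOf (↑Rp : Set L) ∈ fanI R) ∧
    ⋃₀ {σ ∈ fanI R | σ ⊆ coneOf (↑Rp : Set L)} = coneOf (↑Rp : Set L) ∧
    (∀ σ₁ ∈ {σ ∈ fanI R | σ ⊆ coneOf (↑Rp : Set L)},
      ∀ σ₂ ∈ {σ ∈ fanI R | σ ⊆ coneOf (↑Rp : Set L)},
      IsFaceOf σ₁ (σ₁ ∩ σ₂)) ∧
    (∀ σ ∈ {σ ∈ fanI R | σ ⊆ coneOf (↑Rp : Set L)}, ∀ τ : Set (L →+ ℝ),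
      IsFaceOf σ τ → τ ∈ {σ ∈ fanI R | σ ⊆ coneOf (↑Rp : Set L)}) :=
  statement14_general R hsym Rp hsub
end

section
/- Let A be a ℚ-algebra, and let I^{(r)} (r ≥ 1) be two-sided ideals of A with I^{(1)} ⊇ I^{(2)} ⊇ ⋯, I^{(r)} I^{(s)} ⊆ I^{(r+s)} for all r, s ≥ 1, and I^{(r)} = 0 for r sufficiently large; set I = I^{(1)}. Let M₁, …, M_m be ℚ-submodules of I such that I^{(r)} = ⊕_{j=1}^m (M_j ∩ I^{(r)}) for every r ≥ 1. Then for every x ∈ I there exists a unique family (x_j)_{1≤j≤m} with x_j ∈ M_j such that exp(x) = exp(x₁) exp(x₂) ⋯ exp(x_m), where exp(y) = ∑_{n≥0} y^n/n! (a finite sum since y is nilpotent). -/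
set_option linter.unusedSectionVars false
namespace S15

variable {A : Type*} [Ring A] [Algebra ℚ A]

def expT (r0 : ℕ) (y : A) : A := ∑ k ∈ Finset.range (r0 + 1), (k.factorial : ℚ)⁻¹ • y ^ k

theorem smul_mem (I : ℕ → AddSubgroup A)
    (habs : ∀ r : ℕ, 1 ≤ r → ∀ a : A, ∀ x ∈ I r, a * x ∈ I r ∧ x * a ∈ I r)
    {r : ℕ} (hr : 1 ≤ r) (q : ℚ) {z : A} (hz : z ∈ I r) : q • z ∈ I r := by
  rw [Algebra.smul_def]
  exact (habs r hr _ z hz).1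

theorem antitone (I : ℕ → AddSubgroup A)
    (hmono : ∀ r : ℕ, 1 ≤ r → I (r + 1) ≤ I r)
    {r s : ℕ} (hr : 1 ≤ r) (hrs : r ≤ s) : I s ≤ I r := by
  induction s, hrs using Nat.le_induction with
  | base => exact le_rfl
  | succ n hn ih => exact (hmono n (hr.trans hn)).trans ih

theorem pow_mem (I : ℕ → AddSubgroup A)
    (hmul : ∀ r s : ℕ, 1 ≤ r → 1 ≤ s → ∀ x ∈ I r, ∀ y ∈ I s, x * y ∈ I (r + s))
    {y : A} (hy : y ∈ I 1) : ∀ k : ℕ, y ^ (k + 1) ∈ I (k + 1) := by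
  intro k
  induction k with
  | zero => simpa using hy
  | succ n ih =>
    have := hmul (n + 1) 1 (by omega) le_rfl _ ih y hy
    rw [← pow_succ] at this
    exact this

theorem expT_zero (r0 : ℕ) : expT r0 (0 : A) = 1 := by
  unfold expT
  rw [Finset.sum_eq_single 0]
  · simp
  · intro k _ hk
    rw [zero_pow hk, smul_zero]
  · simp

theorem expT_sub_one (I : ℕ → AddSubgroup A)
    (habs : ∀ r : ℕ, 1 ≤ r → ∀ a : A, ∀ x ∈ I r, a * x ∈ I r ∧ x * a ∈ I r)
    (hmono : ∀ r : ℕ, 1 ≤ r → I (r + 1) ≤ I r)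
    (hmul : ∀ r s : ℕ, 1 ≤ r → 1 ≤ s → ∀ x ∈ I r, ∀ y ∈ I s, x * y ∈ I (r + s))
    (r0 : ℕ) {y : A} (hy : y ∈ I 1) : expT r0 y - 1 ∈ I 1 := by
  unfold expT
  rw [Finset.sum_range_succ']
  simp only [pow_zero, Nat.factorial_zero, Nat.cast_one, inv_one, one_smul,
    add_sub_cancel_right]
  exact AddSubgroup.sum_mem _ fun k _ =>
    smul_mem I habs le_rfl _ (antitone I hmono le_rfl (by omega) (pow_mem I hmul hy k))



theorem powdiff1 (I : ℕ → AddSubgroup A)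
    (habs : ∀ r : ℕ, 1 ≤ r → ∀ a : A, ∀ x ∈ I r, a * x ∈ I r ∧ x * a ∈ I r)
    {r : ℕ} (hr : 1 ≤ r) {y δ : A} (hδ : δ ∈ I r) :
    ∀ k : ℕ, (y + δ) ^ (k + 1) - y ^ (k + 1) ∈ I r := by
  intro k
  induction k with
  | zero => simpa using hδ
  | succ n ih =>
    have key : (y + δ) ^ (n + 2) - y ^ (n + 2)
        = ((y + δ) ^ (n + 1) - y ^ (n + 1)) * (y + δ) + y ^ (n + 1) * δ := by
      rw [pow_succ, pow_succ]; noncomm_ring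
    rw [key]
    exact AddSubgroup.add_mem _ ((habs r hr _ _ ih).2) ((habs r hr _ _ hδ).1)

theorem powdiff2 (I : ℕ → AddSubgroup A)
    (habs : ∀ r : ℕ, 1 ≤ r → ∀ a : A, ∀ x ∈ I r, a * x ∈ I r ∧ x * a ∈ I r)
    (hmono : ∀ r : ℕ, 1 ≤ r → I (r + 1) ≤ I r)
    (hmul : ∀ r s : ℕ, 1 ≤ r → 1 ≤ s → ∀ x ∈ I r, ∀ y ∈ I s, x * y ∈ I (r + s))
    {r : ℕ} (hr : 1 ≤ r) {y δ : A} (hy : y ∈ I 1) (hδ : δ ∈ I r) (k : ℕ) :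
    (y + δ) ^ (k + 2) - y ^ (k + 2) ∈ I (r + 1) := by
  have key : (y + δ) ^ (k + 2) - y ^ (k + 2)
      = ((y + δ) ^ (k + 1) - y ^ (k + 1)) * y + ((y + δ) ^ (k + 1) - y ^ (k + 1)) * δ
        + y ^ (k + 1) * δ := by
    rw [pow_succ, pow_succ]; noncomm_ring
  rw [key]
  refine AddSubgroup.add_mem _ (AddSubgroup.add_mem _ ?_ ?_) ?_
  · exact hmul r 1 hr le_rfl _ (powdiff1 I habs hr hδ k) _ hy
  · exact antitone I hmono (by omega) (by omega)
      (hmul r r hr hr _ (powdiff1 I habs hr hδ k) _ hδ)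
  · have := hmul (k + 1) r (by omega) hr _ (pow_mem I hmul hy k) _ hδ
    exact antitone I hmono (by omega) (by omega) this

theorem expT_diff (I : ℕ → AddSubgroup A)
    (habs : ∀ r : ℕ, 1 ≤ r → ∀ a : A, ∀ x ∈ I r, a * x ∈ I r ∧ x * a ∈ I r)
    (hmono : ∀ r : ℕ, 1 ≤ r → I (r + 1) ≤ I r)
    (hmul : ∀ r s : ℕ, 1 ≤ r → 1 ≤ s → ∀ x ∈ I r, ∀ y ∈ I s, x * y ∈ I (r + s))
    {r0 : ℕ} (h1 : 1 ≤ r0) {r : ℕ} (hr : 1 ≤ r) {y δ : A} (hy : y ∈ I 1) (hδ : δ ∈ I r) :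
    expT r0 (y + δ) - expT r0 y - δ ∈ I (r + 1) := by
  obtain ⟨s, rfl⟩ : ∃ s, r0 = s + 1 := ⟨r0 - 1, by omega⟩
  have key : expT (s + 1) (y + δ) - expT (s + 1) y - δ
      = ∑ k ∈ Finset.range s, ((k + 2).factorial : ℚ)⁻¹ • ((y + δ) ^ (k + 2) - y ^ (k + 2)) := by
    unfold expT
    rw [← Finset.sum_sub_distrib]
    simp only [← smul_sub]
    rw [Finset.sum_range_succ' _ (s + 1), Finset.sum_range_succ' _ s]
    simp [pow_one, pow_zero]
  rw [key]
  exact AddSubgroup.sum_mem _ fun k _ =>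
    smul_mem I habs (by omega) _ (powdiff2 I habs hmono hmul hr hy hδ k)



theorem prod_sub_one (I : ℕ → AddSubgroup A)
    (habs : ∀ r : ℕ, 1 ≤ r → ∀ a : A, ∀ x ∈ I r, a * x ∈ I r ∧ x * a ∈ I r) :
    ∀ (n : ℕ) (f : Fin n → A), (∀ i, f i - 1 ∈ I 1) →
      (List.ofFn f).prod - 1 ∈ I 1 := by
  intro n
  induction n with
  | zero => intro f _; simpa using AddSubgroup.zero_mem _
  | succ n ih =>
    intro f hf
    rw [List.ofFn_succ, List.prod_cons]
    have key : f 0 * (List.ofFn fun i => f i.succ).prod - 1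
        = (f 0 - 1) * (List.ofFn fun i => f i.succ).prod
          + ((List.ofFn fun i => f i.succ).prod - 1) := by noncomm_ring
    rw [key]
    exact AddSubgroup.add_mem _ ((habs 1 le_rfl _ _ (hf 0)).2)
      (ih _ fun i => hf i.succ)

theorem prod_diff (I : ℕ → AddSubgroup A)
    (habs : ∀ r : ℕ, 1 ≤ r → ∀ a : A, ∀ x ∈ I r, a * x ∈ I r ∧ x * a ∈ I r)
    (hmono : ∀ r : ℕ, 1 ≤ r → I (r + 1) ≤ I r)
    (hmul : ∀ r s : ℕ, 1 ≤ r → 1 ≤ s → ∀ x ∈ I r, ∀ y ∈ I s, x * y ∈ I (r + s))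
    {r : ℕ} (hr : 1 ≤ r) :
    ∀ (n : ℕ) (f g : Fin n → A), (∀ i, f i - 1 ∈ I 1) → (∀ i, g i - 1 ∈ I 1) →
      (∀ i, g i - f i ∈ I r) →
      (List.ofFn g).prod - (List.ofFn f).prod - ∑ i, (g i - f i) ∈ I (r + 1) := by
  intro n
  induction n with
  | zero => intro f g _ _ _; simpa using AddSubgroup.zero_mem _
  | succ n ih =>
    intro f g hf hg hfg
    rw [List.ofFn_succ, List.ofFn_succ, List.prod_cons, List.prod_cons, Fin.sum_univ_succ]
    set P := (List.ofFn fun i => f i.succ).prod with hP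
    set Q := (List.ofFn fun i => g i.succ).prod with hQ
    set S := ∑ i : Fin n, (g i.succ - f i.succ) with hS
    have hQPS : Q - P - S ∈ I (r + 1) :=
      ih _ _ (fun i => hf i.succ) (fun i => hg i.succ) (fun i => hfg i.succ)
    have hsum : S ∈ I r := AddSubgroup.sum_mem _ fun i _ => hfg i.succ
    have hQP' : Q - P ∈ I r := by
      have := AddSubgroup.add_mem _ (antitone I hmono hr (by omega) hQPS) hsum
      simpa using this
    have hQ1 : Q - 1 ∈ I 1 := prod_sub_one I habs n _ fun i => hg i.succ
    have key : g 0 * Q - f 0 * P - (g 0 - f 0 + S)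
        = (g 0 - f 0) * (Q - 1) + (f 0 - 1) * (Q - P) + (Q - P - S) := by
      noncomm_ring
    rw [key]
    refine AddSubgroup.add_mem _ (AddSubgroup.add_mem _ ?_ ?_) hQPS
    · exact hmul r 1 hr le_rfl _ (hfg 0) _ hQ1
    · have := hmul 1 r le_rfl hr _ (hf 0) _ hQP'
      rw [add_comm] at this
      exact this

end S15

/-- Let `A` be a `ℚ`-algebra and `I⁽ʳ⁾` (`r ≥ 1`) two-sided ideals with
`I⁽¹⁾ ⊇ I⁽²⁾ ⊇ ⋯`, `I⁽ʳ⁾I⁽ˢ⁾ ⊆ I⁽ʳ⁺ˢ⁾`, and `I⁽ʳ⁾ = 0` for `r ≥ r₀`; set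
`I = I⁽¹⁾`. Let `M₁, …, Mₘ` be `ℚ`-submodules of `I` with
`I⁽ʳ⁾ = ⊕ⱼ (Mⱼ ∩ I⁽ʳ⁾)` for all `r ≥ 1`. Then every `x ∈ I` admits a unique
family `(xⱼ)` with `xⱼ ∈ Mⱼ` and `exp(x) = exp(x₁)·exp(x₂)⋯exp(xₘ)`
(all exponentials are finite sums since the elements are nilpotent; here they
are truncated at degree `r₀`, beyond which all powers vanish). -/
theorem statement15 {A : Type*} [Ring A] [Algebra ℚ A]
    (I : ℕ → AddSubgroup A)
    (habs : ∀ r : ℕ, 1 ≤ r → ∀ a : A, ∀ x ∈ I r, a * x ∈ I r ∧ x * a ∈ I r)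
    (hmono : ∀ r : ℕ, 1 ≤ r → I (r + 1) ≤ I r)
    (hmul : ∀ r s : ℕ, 1 ≤ r → 1 ≤ s → ∀ x ∈ I r, ∀ y ∈ I s, x * y ∈ I (r + s))
    (r0 : ℕ) (hr0 : ∀ r : ℕ, r0 ≤ r → I r = ⊥)
    (m : ℕ) (M : Fin m → Submodule ℚ A)
    (hMI : ∀ j, ∀ x ∈ M j, x ∈ I 1)
    (hdirect : ∀ r : ℕ, 1 ≤ r → ∀ x ∈ I r, ∃! c : Fin m → A,
      (∀ j, c j ∈ M j ∧ c j ∈ I r) ∧ x = ∑ j, c j) :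
    ∀ x ∈ I 1, ∃! c : Fin m → A, (∀ j, c j ∈ M j) ∧
      (∑ k ∈ Finset.range (r0 + 1), (k.factorial : ℚ)⁻¹ • x ^ k)
        = (List.ofFn fun j =>
            ∑ k ∈ Finset.range (r0 + 1), (k.factorial : ℚ)⁻¹ • (c j) ^ k).prod := by
  intro x hx
  show ∃! c : Fin m → A, (∀ j, c j ∈ M j) ∧
    S15.expT r0 x = (List.ofFn fun j => S15.expT r0 (c j)).prod
  by_cases h0 : r0 = 0
  · subst h0
    have hI1 : I 1 = ⊥ := hr0 1 (by omega)
    refine ⟨0, ⟨fun j => (M j).zero_mem, ?_⟩, ?_⟩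
    · simp [S15.expT]
    · intro c ⟨hcM, _⟩
      funext j
      have : c j ∈ I 1 := hMI j _ (hcM j)
      rw [hI1] at this
      simpa using this
  have h1 : 1 ≤ r0 := by omega
  have hEsub1 : ∀ {y : A}, y ∈ I 1 → S15.expT r0 y - 1 ∈ I 1 :=
    fun hy => S15.expT_sub_one I habs hmono hmul r0 hy
  -- existence of successive approximations
  have exist : ∀ n : ℕ, ∃ c : Fin m → A, (∀ j, c j ∈ M j ∧ c j ∈ I 1) ∧
      S15.expT r0 x - (List.ofFn fun j => S15.expT r0 (c j)).prod ∈ I (n + 1) := by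
    intro n
    induction n with
    | zero =>
      refine ⟨0, fun j => ⟨(M j).zero_mem, (I 1).zero_mem⟩, ?_⟩
      simp only [Pi.zero_apply, S15.expT_zero]
      simpa using hEsub1 hx
    | succ n ih =>
      obtain ⟨c, hc, hd⟩ := ih
      obtain ⟨δ, ⟨hδ, hdsum⟩, -⟩ := hdirect (n + 1) (by omega) _ hd
      have hc'I : ∀ j, c j + δ j ∈ I 1 := fun j =>
        (I 1).add_mem (hc j).2 (S15.antitone I hmono le_rfl (by omega) (hδ j).2)
      refine ⟨fun j => c j + δ j,
        fun j => ⟨(M j).add_mem (hc j).1 (hδ j).1, hc'I j⟩, ?_⟩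
      have hT : (List.ofFn fun j => S15.expT r0 (c j + δ j)).prod
          - (List.ofFn fun j => S15.expT r0 (c j)).prod
          - ∑ j, (S15.expT r0 (c j + δ j) - S15.expT r0 (c j)) ∈ I (n + 1 + 1) :=
        S15.prod_diff I habs hmono hmul (by omega) m _ _
          (fun j => hEsub1 (hc j).2) (fun j => hEsub1 (hc'I j))
          (fun j => by
            have h2 := S15.expT_diff I habs hmono hmul h1 (r := n + 1) (by omega)
              (hc j).2 (hδ j).2
            have := (I (n + 1)).add_mem
              (S15.antitone I hmono (by omega) (by omega) h2) (hδ j).2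
            simpa using this)
      have hEd : ∑ j, (S15.expT r0 (c j + δ j) - S15.expT r0 (c j) - δ j) ∈ I (n + 1 + 1) :=
        AddSubgroup.sum_mem _ fun j _ =>
          S15.expT_diff I habs hmono hmul h1 (by omega) (hc j).2 (hδ j).2
      have hkey : S15.expT r0 x - (List.ofFn fun j => S15.expT r0 (c j + δ j)).prod
          = (S15.expT r0 x - (List.ofFn fun j => S15.expT r0 (c j)).prod - ∑ j, δ j)
            - ((List.ofFn fun j => S15.expT r0 (c j + δ j)).prod
              - (List.ofFn fun j => S15.expT r0 (c j)).prod
              - ∑ j, (S15.expT r0 (c j + δ j) - S15.expT r0 (c j)))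
            - ∑ j, (S15.expT r0 (c j + δ j) - S15.expT r0 (c j) - δ j) := by
        simp only [Finset.sum_sub_distrib]
        abel
      rw [hkey, ← hdsum, sub_self]
      exact (I (n + 1 + 1)).sub_mem ((I (n + 1 + 1)).sub_mem (I _).zero_mem hT) hEd
  obtain ⟨c, hc, hfin⟩ := exist r0
  rw [hr0 (r0 + 1) (by omega)] at hfin
  have hceq : S15.expT r0 x = (List.ofFn fun j => S15.expT r0 (c j)).prod :=
    sub_eq_zero.mp ((AddSubgroup.mem_bot).1 hfin)
  refine ⟨c, ⟨fun j => (hc j).1, hceq⟩, ?_⟩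
  intro c' ⟨hc'M, hc'eq⟩
  have hc'I : ∀ j, c' j ∈ I 1 := fun j => hMI j _ (hc'M j)
  have claim : ∀ n : ℕ, ∀ j, c' j - c j ∈ I (n + 1) := by
    intro n
    induction n with
    | zero => exact fun j => (I 1).sub_mem (hc'I j) (hc j).2
    | succ n ihn =>
      have hEd : ∀ j, S15.expT r0 (c' j) - S15.expT r0 (c j) - (c' j - c j)
          ∈ I (n + 1 + 1) := fun j => by
        have h2 := S15.expT_diff I habs hmono hmul h1 (r := n + 1) (by omega)
          (hc j).2 (ihn j)
        have e : c j + (c' j - c j) = c' j := by abel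
        rwa [e] at h2
      have hT : (List.ofFn fun j => S15.expT r0 (c' j)).prod
          - (List.ofFn fun j => S15.expT r0 (c j)).prod
          - ∑ j, (S15.expT r0 (c' j) - S15.expT r0 (c j)) ∈ I (n + 1 + 1) :=
        S15.prod_diff I habs hmono hmul (by omega) m _ _
          (fun j => hEsub1 (hc j).2) (fun j => hEsub1 (hc'I j))
          (fun j => by
            have := (I (n + 1)).add_mem
              (S15.antitone I hmono (by omega) (by omega) (hEd j)) (ihn j)
            simpa using this)
      have hPP : (List.ofFn fun j => S15.expT r0 (c' j)).prod
          = (List.ofFn fun j => S15.expT r0 (c j)).prod := by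
        rw [← hceq, ← hc'eq]
      rw [hPP, sub_self, zero_sub] at hT
      have hS1 : ∑ j, (S15.expT r0 (c' j) - S15.expT r0 (c j)) ∈ I (n + 1 + 1) := by
        simpa using (I (n + 1 + 1)).neg_mem hT
      have hS2 : ∑ j, (c' j - c j) ∈ I (n + 1 + 1) := by
        have hEdsum : ∑ j, (S15.expT r0 (c' j) - S15.expT r0 (c j) - (c' j - c j))
            ∈ I (n + 1 + 1) := AddSubgroup.sum_mem _ fun j _ => hEd j
        have e : ∑ j, (c' j - c j)
            = (∑ j, (S15.expT r0 (c' j) - S15.expT r0 (c j)))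
              - ∑ j, (S15.expT r0 (c' j) - S15.expT r0 (c j) - (c' j - c j)) := by
          simp only [Finset.sum_sub_distrib]
          abel
        rw [e]
        exact (I (n + 1 + 1)).sub_mem hS1 hEdsum
      have hS2' : (∑ j, (c' j - c j)) ∈ I (n + 1) :=
        AddSubgroup.sum_mem _ fun j _ => ihn j
      obtain ⟨w, hw, huniq⟩ := hdirect (n + 1) (by omega) _ hS2'
      obtain ⟨ε, ⟨hε, hεsum⟩, -⟩ := hdirect (n + 1 + 1) (by omega) _ hS2
      have e1 : (fun j => c' j - c j) = w :=
        huniq _ ⟨fun j => ⟨(M j).sub_mem (hc'M j) ((hc j).1), ihn j⟩, rfl⟩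
      have e2 : ε = w :=
        huniq _ ⟨fun j => ⟨(hε j).1,
          S15.antitone I hmono (by omega) (by omega) (hε j).2⟩, hεsum⟩
      intro j
      have : c' j - c j = ε j := by rw [congrFun e1 j, ← congrFun e2 j]
      rw [this]
      exact (hε j).2
  funext j
  have := claim r0 j
  rw [hr0 (r0 + 1) (by omega)] at this
  exact sub_eq_zero.mp ((AddSubgroup.mem_bot).1 this)
end

section
/- Let φ : A → B be a homomorphism of finitely generated free abelian groups (written multiplicatively) whose cokernel is finite, let A' be a finite-index subgroup of A, let V be a valuative submonoid of B, and let V' = {a ∈ A' : φ(a) ∈ V}. Then the induced map V'/(V')^× → V/V^× is injective, and for every element v ∈ V/V^× there exists an integer m ≥ 1 such that v^m lies in the image of V'/(V')^×. -/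
/-- Let `φ : A → B` be a homomorphism of finitely generated free abelian
groups with finite cokernel, `A'` a finite-index subgroup of `A`, `V` a
valuative submonoid of `B`, and `V' = {a ∈ A' : φ(a) ∈ V}`. Then the induced
map `V'/(V')^× → V/V^×` is injective, and every element of `V/V^×` has a
positive power in the image (the Kummer property). Classes in the sharp
quotients are spelled out elementwise: `x`, `y` have the same class iff
`x - y` and `y - x` both lie in the monoid. -/
theorem statement16 {A B : Type*} [AddCommGroup A] [AddCommGroup B]
    [Module.Free ℤ A] [Module.Finite ℤ A]
    [Module.Free ℤ B] [Module.Finite ℤ B]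
    (φ : A →+ B) (hcoker : Finite (B ⧸ φ.range))
    (A' : AddSubgroup A) (hA' : A'.FiniteIndex)
    (V : AddSubmonoid B) (hval : ∀ b : B, b ∈ V ∨ -b ∈ V) :
    (∀ a₁ a₂ : A, a₁ ∈ A' → φ a₁ ∈ V → a₂ ∈ A' → φ a₂ ∈ V →
      φ (a₁ - a₂) ∈ V → φ (a₂ - a₁) ∈ V →
      ((a₁ - a₂ ∈ A' ∧ φ (a₁ - a₂) ∈ V) ∧ (a₂ - a₁ ∈ A' ∧ φ (a₂ - a₁) ∈ V))) ∧
    (∀ b : B, b ∈ V → ∃ m : ℕ, 1 ≤ m ∧ ∃ a : A, a ∈ A' ∧ φ a ∈ V ∧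
      m • b - φ a ∈ V ∧ φ a - m • b ∈ V) := by
  constructor
  · intro a₁ a₂ h₁ _ h₂ _ hd₁ hd₂
    exact ⟨⟨A'.sub_mem h₁ h₂, hd₁⟩, ⟨A'.sub_mem h₂ h₁, hd₂⟩⟩
  · intro b hb
    -- first, some positive multiple of b is in the range of φ
    obtain ⟨n, hn, a₀, ha₀⟩ : ∃ n : ℕ, 0 < n ∧ ∃ a : A, φ a = n • b := by
      have : IsOfFinAddOrder ((QuotientAddGroup.mk b : B ⧸ φ.range)) :=
        isOfFinAddOrder_of_finite _
      obtain ⟨n, hn, hnb⟩ := this.exists_nsmul_eq_zero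
      refine ⟨n, hn, ?_⟩
      have : ((n • b : B) : B ⧸ φ.range) = 0 := by
        have := map_nsmul (QuotientAddGroup.mk' φ.range) n b
        simp only [QuotientAddGroup.mk'_apply] at this
        rw [this]; exact hnb
      exact (QuotientAddGroup.eq_zero_iff _).mp this
    -- then a positive multiple of a₀ lies in A'
    have hk : A'.index • a₀ ∈ A' := AddSubgroup.nsmul_index_mem A' a₀
    refine ⟨A'.index * n, ?_, A'.index • a₀, hk, ?_, ?_, ?_⟩
    · exact Nat.one_le_iff_ne_zero.mpr (Nat.mul_ne_zero hA'.index_ne_zero hn.ne')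
    · rw [map_nsmul, ha₀, ← mul_smul]
      exact AddSubmonoid.nsmul_mem V hb _
    · rw [map_nsmul, ha₀, ← mul_smul, sub_self]
      exact V.zero_mem
    · rw [map_nsmul, ha₀, ← mul_smul, sub_self]
      exact V.zero_mem
end
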